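/- arXiv:1405.4421 — 8 statements merged into one kernel-verified Lean document; each statement's English description precedes it below -/
import Mathlib

section
/- For any continuous function S : [0,∞) → ℝ, any finite partition 0 = t_0 < t_1 < … < t_K < t_{K+1} = ∞, any t ≥ 0 and u ∈ ℝ, the discrete Tanaka identity holds: ∑_{j=0}^{K} 1_{⦇S(t_j∧t), S(t_{j+1}∧t)⦈}(u) · |S(t_{j+1}∧t) − u| = (S(t) − u)^− − (S(0) − u)^− + ∑_{j=0}^{K} 1_{(−∞,u)}(S(t_j)) · (S(t_{j+1}∧t) − S(t_j∧t)), where ⦇a,b⦈ denotes the half-open interval (a,b] if a ≤ b and (b,a] if a > b, and (x)^− = max(0, −x). -/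
/-!
Each summand obeys the one-step identity
`1_{⦇a,b⦈}(u) |b - u| = (u - b)⁺ - (u - a)⁺ + 1_{a < u} (b - a)`, so along the stopped path
`x_j = S (τ_j ∧ t)` the sum telescopes. Replacing `1_{x_j < u}` by `1_{S τ_j < u}` is harmless:
once `τ_j > t` the stopped path is constant, so that increment vanishes.
-/

open Set Classical

/-- `⦇a,b⦈` : the half-open interval `(a,b]` if `a ≤ b`, and `(b,a]` otherwise. -/
noncomputable def hook (a b : ℝ) : Set ℝ := if a ≤ b then Set.Ioc a b else Set.Ioc b a

theorem ite_mem_hook_abs_sub (a b u : ℝ) :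
    (if u ∈ hook a b then |b - u| else 0)
      = max 0 (u - b) - max 0 (u - a) + (if a < u then b - a else 0) := by
  simp only [hook]
  split_ifs <;> simp only [mem_Ioc] at * <;>
    rcases abs_cases (b - u) with ⟨_, _⟩ | ⟨_, _⟩ <;>
    rcases max_cases 0 (u - b) with ⟨_, _⟩ | ⟨_, _⟩ <;>
    rcases max_cases 0 (u - a) with ⟨_, _⟩ | ⟨_, _⟩ <;>
    first
    | linarith [‹_ ∧ _›.1, ‹_ ∧ _›.2]
    | linarith
    | exact absurd ⟨by linarith, by linarith⟩ ‹¬(_ ∧ _)›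

theorem sum_range_ite_mem_hook_abs_sub (x : ℕ → ℝ) (u : ℝ) (n : ℕ) :
    (∑ j ∈ Finset.range n, if u ∈ hook (x j) (x (j + 1)) then |x (j + 1) - u| else 0)
      = max 0 (u - x n) - max 0 (u - x 0)
        + ∑ j ∈ Finset.range n, if x j < u then x (j + 1) - x j else 0 := by
  simp only [ite_mem_hook_abs_sub, Finset.sum_add_distrib,
    Finset.sum_range_sub (fun j => max 0 (u - x j))]

theorem discrete_tanaka_general
    (S : ℝ → ℝ)
    (K : ℕ) (τ : ℕ → ℝ) (hτ0 : τ 0 = 0) (hmono : ∀ j < K, τ j < τ (j + 1))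
    (t : ℝ) (ht : 0 ≤ t) (u : ℝ) :
    (∑ j ∈ Finset.range (K + 1),
        if u ∈ hook (S (min (τ j) t)) (S (if j < K then min (τ (j + 1)) t else t))
        then |S (if j < K then min (τ (j + 1)) t else t) - u| else 0)
      = max 0 (u - S t) - max 0 (u - S 0)
        + ∑ j ∈ Finset.range (K + 1),
            if S (τ j) < u
            then S (if j < K then min (τ (j + 1)) t else t) - S (min (τ j) t)
            else 0 := by
  set x : ℕ → ℝ := fun j => S (if j ≤ K then min (τ j) t else t) with hx
  have hx_self : ∀ j < K + 1, x j = S (min (τ j) t) := fun j hj => by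
    simp only [hx, if_pos (Nat.le_of_lt_succ hj)]
  have hx_succ : ∀ j, x (j + 1) = S (if j < K then min (τ (j + 1)) t else t) := fun j => by
    simp only [hx, Nat.add_one_le_iff]
  have hx_zero : x 0 = S 0 := by rw [hx_self 0 K.succ_pos, hτ0, min_eq_left ht]
  have hx_last : x (K + 1) = S t := by simp [hx]
  have h_stopped : ∀ j < K + 1, (if S (τ j) < u then x (j + 1) - x j else 0)
      = if x j < u then x (j + 1) - x j else 0 := by
    intro j hj
    rcases le_or_gt (τ j) t with hjt | hjt
    · rw [hx_self j hj, min_eq_left hjt]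
    · have : x (j + 1) = x j := by
        rw [hx_self j hj, hx_succ, min_eq_right hjt.le]
        split_ifs with hjK
        · rw [min_eq_right (hjt.trans (hmono j hjK)).le]
        · rfl
      simp [this]
  calc _ = ∑ j ∈ Finset.range (K + 1),
          if u ∈ hook (x j) (x (j + 1)) then |x (j + 1) - u| else 0 :=
        Finset.sum_congr rfl fun j hj => by rw [hx_self j (Finset.mem_range.1 hj), hx_succ]
    _ = max 0 (u - x (K + 1)) - max 0 (u - x 0)
          + ∑ j ∈ Finset.range (K + 1), if x j < u then x (j + 1) - x j else 0 :=
        sum_range_ite_mem_hook_abs_sub x u (K + 1)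
    _ = _ := by
        rw [hx_last, hx_zero]
        refine congrArg _ (Finset.sum_congr rfl fun j hj => ?_)
        rw [← h_stopped j (Finset.mem_range.1 hj), hx_self j (Finset.mem_range.1 hj), hx_succ]

/-- Discrete Tanaka identity for a finite partition `0 = t_0 < … < t_K < t_{K+1} = ∞`. -/
theorem discrete_tanaka
    (S : ℝ → ℝ) (hS : Continuous S)
    (K : ℕ) (τ : ℕ → ℝ) (hτ0 : τ 0 = 0) (hmono : ∀ j < K, τ j < τ (j + 1))
    (t : ℝ) (ht : 0 ≤ t) (u : ℝ) :
    (∑ j ∈ Finset.range (K + 1),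
        if u ∈ hook (S (min (τ j) t)) (S (if j < K then min (τ (j + 1)) t else t))
        then |S (if j < K then min (τ (j + 1)) t else t) - u| else 0)
      = max 0 (u - S t) - max 0 (u - S 0)
        + ∑ j ∈ Finset.range (K + 1),
            if S (τ j) < u
            then S (if j < K then min (τ (j + 1)) t else t) - S (min (τ j) t)
            else 0 :=
  discrete_tanaka_general S K τ hτ0 hmono t ht u
end

section
/- Let f : ℝ → ℝ be absolutely continuous with right-continuous derivative f′ of locally bounded variation. Then for all real b < a: f(b) − f(a) = f′(a)(b − a) + ∫_{(b,a]} (t − b) df′(t), where the integral is a Lebesgue–Stieltjes integral against df′. -/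
open Set MeasureTheory

/-! Both sides of the Stieltjes identity `∫_{(b,a]} (g a - g y) dy = ∫_{(b,a]} (t - b) dg(t)`
are the product measure `dy ⊗ dg` of the triangle `{b < y < t ≤ a}`, sliced in the two
directions. The theorem follows by splitting `f' = g - h` and writing `f(b) - f(a) = -∫_{(b,a]} f'`. -/

lemma lintegral_measure_Ioc_eq_lintegral_ofReal_sub (μ : Measure ℝ) [SFinite μ] (a b : ℝ) :
    ∫⁻ y in Ioc b a, μ (Ioc y a) = ∫⁻ t in Ioc b a, ENNReal.ofReal (t - b) ∂μ := by
  have hlt : MeasurableSet {p : ℝ × ℝ | p.1 < p.2} :=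
    measurableSet_lt measurable_fst measurable_snd
  calc ∫⁻ y in Ioc b a, μ (Ioc y a)
      = ∫⁻ y in Ioc b a, μ.restrict (Ioc b a) (Ioi y) := by
        refine setLIntegral_congr_fun measurableSet_Ioc fun y hy => ?_
        rw [Measure.restrict_apply measurableSet_Ioi, inter_comm, Ioc_inter_Ioi,
          sup_eq_right.2 hy.1.le]
    _ = ((volume.restrict (Ioc b a)).prod (μ.restrict (Ioc b a))) {p | p.1 < p.2} :=
        (Measure.prod_apply hlt).symm
    _ = ∫⁻ t in Ioc b a, volume.restrict (Ioc b a) (Iio t) ∂μ := Measure.prod_apply_symm hlt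
    _ = ∫⁻ t in Ioc b a, ENNReal.ofReal (t - b) ∂μ := by
        refine setLIntegral_congr_fun measurableSet_Ioc fun t ht => ?_
        have hIoo : Iio t ∩ Ioc b a = Ioo b t := by
          ext y; simp only [mem_inter_iff, mem_Iio, mem_Ioc, mem_Ioo]
          grind
        rw [Measure.restrict_apply measurableSet_Iio, hIoo, Real.volume_Ioo]

lemma StieltjesFunction.setIntegral_Ioc_sub_eq_setIntegral_measure (g : StieltjesFunction ℝ)
    (a b : ℝ) :
    ∫ y in Ioc b a, (g a - g y) = ∫ t in Ioc b a, (t - b) ∂g.measure := by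
  have hg_nonneg : 0 ≤ᵐ[volume.restrict (Ioc b a)] fun y => g a - g y := by
    filter_upwards [ae_restrict_mem measurableSet_Ioc] with y hy
    exact sub_nonneg.2 (g.mono hy.2)
  have hsub_nonneg : 0 ≤ᵐ[g.measure.restrict (Ioc b a)] fun t => t - b := by
    filter_upwards [ae_restrict_mem measurableSet_Ioc] with t ht
    exact sub_nonneg.2 ht.1.le
  rw [integral_eq_lintegral_of_nonneg_ae hg_nonneg
      (measurable_const.sub g.mono.measurable).aestronglyMeasurable,
    integral_eq_lintegral_of_nonneg_ae hsub_nonneg (by fun_prop),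
    ← lintegral_measure_Ioc_eq_lintegral_ofReal_sub]
  simp_rw [g.measure_Ioc]

lemma StieltjesFunction.setIntegral_Ioc_sub_sub_eq_setIntegral_measure_sub
    (g h : StieltjesFunction ℝ) (a b : ℝ) :
    ∫ y in Ioc b a, ((g a - h a) - (g y - h y)) =
      (∫ t in Ioc b a, (t - b) ∂g.measure) - ∫ t in Ioc b a, (t - b) ∂h.measure := by
  have hint (k : StieltjesFunction ℝ) : IntegrableOn (fun y => k a - k y) (Ioc b a) :=
    (integrableOn_const measure_Ioc_lt_top.ne).sub (k.mono.intervalIntegrable (a := b) (b := a)).1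
  rw [← g.setIntegral_Ioc_sub_eq_setIntegral_measure,
    ← h.setIntegral_Ioc_sub_eq_setIntegral_measure, ← integral_sub (hint g) (hint h)]
  congr 1 with y
  ring

lemma intervalIntegral_eq_ite_setIntegral_Ioc (φ : ℝ → ℝ) (c x : ℝ) :
    ∫ y in c..x, φ y = if c ≤ x then ∫ y in Ioc c x, φ y else -∫ y in Ioc x c, φ y := by
  split_ifs with hcx
  · exact intervalIntegral.integral_of_le hcx
  · exact intervalIntegral.integral_of_ge (le_of_not_ge hcx)

lemma setIntegral_Ioc_const_sub (φ : ℝ → ℝ) {a b : ℝ} (hba : b ≤ a)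
    (hφ : IntegrableOn φ (Ioc b a)) :
    ∫ y in Ioc b a, (φ a - φ y) = φ a * (a - b) - ∫ y in Ioc b a, φ y := by
  rw [integral_sub (integrableOn_const (C := φ a) measure_Ioc_lt_top.ne) hφ, setIntegral_const,
    Measure.real, Real.volume_Ioc, ENNReal.toReal_ofReal (sub_nonneg.2 hba), smul_eq_mul, mul_comm]

/-- Taylor-type identity (decreasing case) for a primitive of a right-continuous function of
locally bounded variation.  Such a function is exactly a difference `f' = g - h` of two
Stieltjes functions, with Stieltjes measure `df' = dg - dh`.  If `f` is the primitive of `f'`,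
then for all `b < a`: `f(b) - f(a) = f'(a)(b-a) + ∫_{(b,a]} (t - b) df'(t)`. -/
theorem primitive_eq_linear_add_stieltjes_of_lt
    (g h : StieltjesFunction ℝ) (f' f : ℝ → ℝ)
    (hf' : ∀ x, f' x = g x - h x)
    (hf : ∀ x, f x = if 0 ≤ x then ∫ y in Set.Ioc 0 x, f' y else -∫ y in Set.Ioc x 0, f' y)
    (a b : ℝ) (hab : b < a) :
    f b - f a = f' a * (b - a) +
      ((∫ t in Set.Ioc b a, (t - b) ∂g.measure) - ∫ t in Set.Ioc b a, (t - b) ∂h.measure) := by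
  have hf'_int (c d : ℝ) : IntervalIntegrable f' volume c d := by
    rw [funext hf']
    exact g.mono.intervalIntegrable.sub h.mono.intervalIntegrable
  have hf_primitive (x : ℝ) : f x = ∫ y in (0 : ℝ)..x, f' y := by
    rw [hf, intervalIntegral_eq_ite_setIntegral_Ioc]
  have hf_sub : f b - f a = -∫ y in Ioc b a, f' y := by
    rw [hf_primitive, hf_primitive, intervalIntegral.integral_interval_sub_left (hf'_int 0 b)
      (hf'_int 0 a), intervalIntegral.integral_symm, intervalIntegral.integral_of_le hab.le]
  have hremainder := g.setIntegral_Ioc_sub_sub_eq_setIntegral_measure_sub h a b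
  simp only [← hf'] at hremainder
  rw [setIntegral_Ioc_const_sub f' hab.le (hf'_int b a).1] at hremainder
  linarith
end

section
/- Let (π^n) be a sequence of partitions, S a continuous real path with mesh m(S, π^n[0,t]) → 0 for all t, and suppose the discrete local times L_t^{π^n}(S,·) converge uniformly on ℝ to a limit L_t(S,·) for each t, with (t,u) ↦ L_t(S,u) jointly continuous. Let f : ℝ → ℝ be absolutely continuous with right-continuous derivative f′ of locally bounded variation. Then for every t ≥ 0 the Riemann sums ∑_{t_j ∈ π^n} f′(S(t_j))(S(t_{j+1}∧t) − S(t_j∧t)) converge as n → ∞, and the limit ∫_0^t f′(S(s)) dS(s) satisfies f(S(t)) = f(S(0)) + ∫_0^t f′(S(s)) dS(s) + ∫_ℝ L_t(u) df′(u). -/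
open Set MeasureTheory Filter Classical

/-- The discrete local time of a path `S` along the partition `τ` at time `t` and level `u`. -/
noncomputable def discreteLocalTime (S : ℝ → ℝ) (τ : ℕ → ℝ) (t u : ℝ) : ℝ :=
  ∑' j : ℕ, if u ∈ hook (S (min (τ j) t)) (S (min (τ (j + 1)) t))
            then |S (min (τ (j + 1)) t) - u| else 0

/-!
On a partition `x₀, …, x_N` (finite on `[0, t]` since `π n → ∞`), Taylor's formula with
Stieltjes remainder, `f b - f a - f' a (b - a) = ∫_{⦇a,b⦈} |b - u| df'(u)` (Fubini for
`du ⊗ df'` on the triangle between `a` and `b`), summed over consecutive points gives the exact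
identity `∑ f'(x_j)(x_{j+1} - x_j) = f(S t) - f(S 0) - ∫ L^{π^n}_t(u) df'(u)`.
All discrete local times vanish outside the compact set `S [0, t]`, where `df'` is finite, so
their uniform convergence to `L_t` passes to the `df'`-integrals, and the Riemann sums converge.
-/

-- Both sides are the `volume ⊗ μ`-measure of the triangle `{a < v ≤ u ≤ b}`.
theorem lintegral_measure_Ioc_left_eq_lintegral_sub (μ : Measure ℝ) [SFinite μ] (a b : ℝ) :
    ∫⁻ u in Ioc a b, μ (Ioc a u) = ∫⁻ v in Ioc a b, ENNReal.ofReal (b - v) ∂μ := by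
  have hs : MeasurableSet {p : ℝ × ℝ | p.2 ≤ p.1} :=
    measurableSet_le measurable_snd measurable_fst
  have key := (volume.restrict (Ioc a b)).prod_apply (ν := μ.restrict (Ioc a b)) hs
  rw [Measure.prod_apply_symm hs] at key
  refine ((setLIntegral_congr_fun measurableSet_Ioc fun u hu => ?_).trans key.symm).trans
    (setLIntegral_congr_fun measurableSet_Ioc fun v hv => ?_)
  · change _ = μ.restrict (Ioc a b) (Iic u)
    rw [Measure.restrict_apply measurableSet_Iic, Iic_inter_Ioc_of_le hu.2]
  · change volume.restrict (Ioc a b) (Ici v) = _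
    have hinter : Ici v ∩ Ioc a b = Icc v b := by
      ext; simp only [mem_inter_iff, mem_Ici, mem_Ioc, mem_Icc]; grind
    rw [Measure.restrict_apply measurableSet_Ici, hinter, Real.volume_Icc]

theorem lintegral_measure_Ioc_right_eq_lintegral_sub (μ : Measure ℝ) [SFinite μ] (a b : ℝ) :
    ∫⁻ u in Ioc b a, μ (Ioc u a) = ∫⁻ v in Ioc b a, ENNReal.ofReal (v - b) ∂μ := by
  have hs : MeasurableSet {p : ℝ × ℝ | p.1 < p.2} :=
    measurableSet_lt measurable_fst measurable_snd
  have key := (volume.restrict (Ioc b a)).prod_apply (ν := μ.restrict (Ioc b a)) hs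
  rw [Measure.prod_apply_symm hs] at key
  refine ((setLIntegral_congr_fun measurableSet_Ioc fun u hu => ?_).trans key.symm).trans
    (setLIntegral_congr_fun measurableSet_Ioc fun v hv => ?_)
  · change _ = μ.restrict (Ioc b a) (Ioi u)
    have hinter : Ioi u ∩ Ioc b a = Ioc u a := by
      ext; simp only [mem_inter_iff, mem_Ioi, mem_Ioc]; grind
    rw [Measure.restrict_apply measurableSet_Ioi, hinter]
  · change volume.restrict (Ioc b a) (Iio v) = _
    have hinter : Iio v ∩ Ioc b a = Ioo b v := by
      ext; simp only [mem_inter_iff, mem_Iio, mem_Ioc, mem_Ioo]; grind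
    rw [Measure.restrict_apply measurableSet_Iio, hinter, Real.volume_Ioo]

namespace StieltjesFunction

theorem setIntegral_Ioc_sub_left (g : StieltjesFunction ℝ) (a b : ℝ) :
    ∫ u in Ioc a b, (g u - g a) = ∫ v in Ioc a b, (b - v) ∂g.measure := by
  rw [integral_eq_lintegral_of_nonneg_ae
      (ae_restrict_of_forall_mem measurableSet_Ioc fun u hu => sub_nonneg.2 (g.mono hu.1.le))
      (g.mono.measurable.sub_const _).aestronglyMeasurable,
    integral_eq_lintegral_of_nonneg_ae
      (ae_restrict_of_forall_mem measurableSet_Ioc fun v hv => sub_nonneg.2 hv.2)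
      (measurable_const.sub measurable_id).aestronglyMeasurable,
    ← lintegral_measure_Ioc_left_eq_lintegral_sub]
  simp only [g.measure_Ioc]

theorem setIntegral_Ioc_sub_right (g : StieltjesFunction ℝ) (a b : ℝ) :
    ∫ u in Ioc b a, (g a - g u) = ∫ v in Ioc b a, (v - b) ∂g.measure := by
  rw [integral_eq_lintegral_of_nonneg_ae
      (ae_restrict_of_forall_mem measurableSet_Ioc fun u hu => sub_nonneg.2 (g.mono hu.2))
      (g.mono.measurable.const_sub _).aestronglyMeasurable,
    integral_eq_lintegral_of_nonneg_ae
      (ae_restrict_of_forall_mem measurableSet_Ioc fun v hv => sub_nonneg.2 hv.1.le)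
      (measurable_id.sub measurable_const).aestronglyMeasurable,
    ← lintegral_measure_Ioc_right_eq_lintegral_sub]
  simp only [g.measure_Ioc]

theorem intervalIntegral_sub_eq_setIntegral_hook (g : StieltjesFunction ℝ) (a b : ℝ) :
    ∫ u in a..b, (g u - g a) = ∫ v in hook a b, |b - v| ∂g.measure := by
  rcases le_or_gt a b with hab | hba
  · rw [intervalIntegral.integral_of_le hab, setIntegral_Ioc_sub_left, hook, if_pos hab]
    exact setIntegral_congr_fun measurableSet_Ioc fun v hv =>
      (abs_of_nonneg (sub_nonneg.2 hv.2)).symm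
  · rw [intervalIntegral.integral_symm, intervalIntegral.integral_of_le hba.le, ← integral_neg,
      hook, if_neg hba.not_ge]
    simp only [neg_sub]
    rw [setIntegral_Ioc_sub_right]
    exact setIntegral_congr_fun measurableSet_Ioc fun v hv => by
      rw [abs_of_nonpos (sub_nonpos.2 hv.1.le), neg_sub]

end StieltjesFunction

theorem eq_intervalIntegral_of_eq_ite {f f' : ℝ → ℝ}
    (hf : ∀ x, f x = if 0 ≤ x then ∫ y in Ioc 0 x, f' y else -∫ y in Ioc x 0, f' y)
    (x : ℝ) : f x = ∫ y in 0..x, f' y := by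
  rw [hf]
  split_ifs with hx
  · exact (intervalIntegral.integral_of_le hx).symm
  · exact (intervalIntegral.integral_of_ge (le_of_not_ge hx)).symm

theorem sub_eq_mul_sub_add_integral_hook (g h : StieltjesFunction ℝ) {f' f : ℝ → ℝ}
    (hf' : ∀ x, f' x = g x - h x) (hf : ∀ x, f x = ∫ y in 0..x, f' y) (a b : ℝ) :
    f b - f a = f' a * (b - a)
      + ((∫ u in hook a b, |b - u| ∂g.measure) - ∫ u in hook a b, |b - u| ∂h.measure) := by
  have hk_int : ∀ k : StieltjesFunction ℝ, ∀ c d : ℝ, IntervalIntegrable k volume c d :=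
    fun k _ _ => k.mono.intervalIntegrable
  have hf'_int : ∀ c d : ℝ, IntervalIntegrable f' volume c d := fun c d => by
    rw [funext hf']; exact (hk_int g c d).sub (hk_int h c d)
  calc f b - f a = ∫ u in a..b, f' u := by
        rw [hf, hf, intervalIntegral.integral_interval_sub_left (hf'_int 0 b) (hf'_int 0 a)]
    _ = f' a * (b - a) + ((∫ u in a..b, (g u - g a)) - ∫ u in a..b, (h u - h a)) := by
        rw [← intervalIntegral.integral_sub ((hk_int g a b).sub intervalIntegrable_const)
          ((hk_int h a b).sub intervalIntegrable_const),
          intervalIntegral.integral_congr (f := fun u => g u - g a - (h u - h a))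
            (g := fun u => f' u - f' a) fun u _ => by
            simp only [hf']; ring,
          intervalIntegral.integral_sub (hf'_int a b) intervalIntegrable_const,
          intervalIntegral.integral_const, smul_eq_mul]
        ring
    _ = _ := by
        rw [g.intervalIntegral_sub_eq_setIntegral_hook,
          h.intervalIntegral_sub_eq_setIntegral_hook]

theorem tsum_eq_sum_range_of_eq_zero {F : ℕ → ℝ} {N : ℕ} (hF : ∀ j, N ≤ j → F j = 0) :
    ∑' j, F j = ∑ j ∈ Finset.range N, F j :=
  tsum_eq_sum fun j hj => hF j (by simpa using hj)

theorem measurableSet_hook (a b : ℝ) : MeasurableSet (hook a b) := by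
  unfold hook; split_ifs <;> exact measurableSet_Ioc

theorem hook_subset_uIcc (a b : ℝ) : hook a b ⊆ uIcc a b := by
  unfold hook; split_ifs with hab
  · exact Ioc_subset_Icc_self.trans Icc_subset_uIcc
  · exact Ioc_subset_Icc_self.trans Icc_subset_uIcc'

@[simp] theorem hook_self (a : ℝ) : hook a a = ∅ := by
  simp [hook]

theorem integrable_indicator_hook (μ : Measure ℝ) [IsLocallyFiniteMeasure μ] (a b : ℝ) :
    Integrable ((hook a b).indicator fun v => |b - v|) μ :=
  (integrable_indicator_iff (measurableSet_hook a b)).2 <|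
    (continuous_const.sub continuous_id).abs.integrableOn_uIcc.mono_set (hook_subset_uIcc a b)

noncomputable def seqLocalTime (x : ℕ → ℝ) (u : ℝ) : ℝ :=
  ∑' j : ℕ, if u ∈ hook (x j) (x (j + 1)) then |x (j + 1) - u| else 0

theorem discreteLocalTime_eq_seqLocalTime (S : ℝ → ℝ) (τ : ℕ → ℝ) (t : ℝ) :
    discreteLocalTime S τ t = seqLocalTime fun j => S (min (τ j) t) := rfl

theorem seqLocalTime_eq_zero_of_notMem {x : ℕ → ℝ} {lo hi u : ℝ}
    (hx : ∀ j, x j ∈ Icc lo hi) (hu : u ∉ Icc lo hi) : seqLocalTime x u = 0 := by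
  refine (tsum_congr fun j => if_neg fun hmem => hu ?_).trans tsum_zero
  exact uIcc_subset_Icc (hx j) (hx (j + 1)) (hook_subset_uIcc _ _ hmem)

section EventuallyConstant

variable {x : ℕ → ℝ} {N : ℕ}

theorem seqLocalTime_eq_sum (hx : ∀ j, N ≤ j → x j = x N) :
    seqLocalTime x = fun u => ∑ j ∈ Finset.range N,
      (hook (x j) (x (j + 1))).indicator (fun v => |x (j + 1) - v|) u := by
  ext u
  refine (tsum_eq_sum_range_of_eq_zero fun j hj => ?_).trans
    (Finset.sum_congr rfl fun j _ => by rw [indicator_apply])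
  simp [hx j hj, hx (j + 1) (hj.trans j.le_succ)]

theorem integrable_seqLocalTime (μ : Measure ℝ) [IsLocallyFiniteMeasure μ]
    (hx : ∀ j, N ≤ j → x j = x N) : Integrable (seqLocalTime x) μ := by
  rw [seqLocalTime_eq_sum hx]
  exact integrable_finsetSum _ fun j _ => integrable_indicator_hook μ _ _

theorem integral_seqLocalTime (μ : Measure ℝ) [IsLocallyFiniteMeasure μ]
    (hx : ∀ j, N ≤ j → x j = x N) :
    ∫ u, seqLocalTime x u ∂μ
      = ∑ j ∈ Finset.range N, ∫ u in hook (x j) (x (j + 1)), |x (j + 1) - u| ∂μ := by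
  rw [seqLocalTime_eq_sum hx, integral_finsetSum _ fun j _ => integrable_indicator_hook μ _ _]
  simp only [integral_indicator (measurableSet_hook _ _)]

end EventuallyConstant

theorem tsum_mul_sub_eq_sub_sub_integral_seqLocalTime (g h : StieltjesFunction ℝ)
    {f' f : ℝ → ℝ} (hf' : ∀ x, f' x = g x - h x) (hf : ∀ x, f x = ∫ y in 0..x, f' y)
    {x : ℕ → ℝ} {N : ℕ} (hx : ∀ j, N ≤ j → x j = x N) :
    ∑' j, f' (x j) * (x (j + 1) - x j)
      = f (x N) - f (x 0)
        - ((∫ u, seqLocalTime x u ∂g.measure) - ∫ u, seqLocalTime x u ∂h.measure) := by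
  rw [tsum_eq_sum_range_of_eq_zero fun j hj => by
      rw [hx j hj, hx (j + 1) (hj.trans j.le_succ), sub_self, mul_zero],
    integral_seqLocalTime _ hx, integral_seqLocalTime _ hx,
    ← Finset.sum_range_sub fun j => f (x j), ← Finset.sum_sub_distrib,
    ← Finset.sum_sub_distrib]
  refine Finset.sum_congr rfl fun j _ => ?_
  rw [sub_eq_mul_sub_add_integral_hook g h hf' hf]
  ring

section UniformLimit

variable {α E ι : Type*} [MeasurableSpace α] {μ : Measure α} [IsFiniteMeasure μ]
  [NormedAddCommGroup E] {l : Filter ι} [l.NeBot] [l.IsCountablyGenerated]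
  {F : ι → α → E} {f : α → E}

theorem TendstoUniformly.integrable (hF : ∀ i, Integrable (F i) μ)
    (h : TendstoUniformly F f l) : Integrable f μ := by
  obtain ⟨i, hi⟩ := (Metric.tendstoUniformly_iff.1 h 1 one_pos).exists
  have hf : AEStronglyMeasurable f μ :=
    aestronglyMeasurable_of_tendsto_ae l (fun i => (hF i).1) (ae_of_all _ h.tendsto_at)
  have hclose : Integrable (F i - f) μ :=
    .of_bound ((hF i).1.sub hf) 1 <| ae_of_all _ fun a => by
      rw [Pi.sub_apply, ← dist_eq_norm, dist_comm]; exact (hi a).le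
  simpa using (hF i).sub hclose

theorem TendstoUniformly.tendsto_integral [NormedSpace ℝ E] (hF : ∀ i, Integrable (F i) μ)
    (h : TendstoUniformly F f l) :
    Tendsto (fun i => ∫ a, F i a ∂μ) l (nhds (∫ a, f a ∂μ)) := by
  refine tendsto_integral_filter_of_dominated_convergence (fun a => ‖f a‖ + 1)
    (.of_forall fun i => (hF i).1) ?_ ((h.integrable hF).norm.add (integrable_const 1))
    (ae_of_all _ h.tendsto_at)
  filter_upwards [Metric.tendstoUniformly_iff.1 h 1 one_pos] with i hi
  refine ae_of_all _ fun a => ?_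
  have := norm_sub_norm_le (F i a) (f a)
  rw [← dist_eq_norm, dist_comm] at this
  linarith [hi a]

end UniformLimit

theorem tendsto_integral_seqLocalTime (μ : Measure ℝ) [IsLocallyFiniteMeasure μ]
    {x : ℕ → ℕ → ℝ} {lo hi : ℝ} {L : ℝ → ℝ} (hx : ∀ n j, x n j ∈ Icc lo hi)
    (hconst : ∀ n, ∃ N, ∀ j, N ≤ j → x n j = x n N)
    (hL : TendstoUniformly (fun n => seqLocalTime (x n)) L atTop) :
    Tendsto (fun n => ∫ u, seqLocalTime (x n) u ∂μ) atTop (nhds (∫ u, L u ∂μ)) := by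
  have : IsFiniteMeasure (μ.restrict (Icc lo hi)) :=
    isFiniteMeasure_restrict.2 measure_Icc_lt_top.ne
  have hL0 : ∀ u ∉ Icc lo hi, L u = 0 := fun u hu =>
    tendsto_nhds_unique (hL.tendsto_at u) <| by
      simpa only [seqLocalTime_eq_zero_of_notMem (hx _) hu] using tendsto_const_nhds
  rw [← setIntegral_eq_integral_of_forall_compl_eq_zero hL0]
  refine (hL.tendsto_integral fun n => ?_).congr fun n => ?_
  · obtain ⟨N, hN⟩ := hconst n
    exact (integrable_seqLocalTime μ hN).restrict
  · exact setIntegral_eq_integral_of_forall_compl_eq_zero fun u hu =>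
      seqLocalTime_eq_zero_of_notMem (hx n) hu

theorem pathwise_generalized_ito_general
    (S : ℝ → ℝ) (hS : Continuous S)
    (π : ℕ → ℕ → ℝ)
    (hπ0 : ∀ n, π n 0 = 0) (hπmono : ∀ n, StrictMono (π n))
    (hπtop : ∀ n, Tendsto (π n) atTop atTop)
    (L : ℝ → ℝ → ℝ)
    (hLconv : ∀ t : ℝ, 0 ≤ t →
      TendstoUniformly (fun n u => discreteLocalTime S (π n) t u) (L t) atTop)
    (g h : StieltjesFunction ℝ) (f' f : ℝ → ℝ)
    (hf' : ∀ x, f' x = g x - h x)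
    (hf : ∀ x, f x = if 0 ≤ x then ∫ y in Set.Ioc 0 x, f' y else -∫ y in Set.Ioc x 0, f' y)
    (t : ℝ) (ht : 0 ≤ t) :
    ∃ I : ℝ,
      Tendsto (fun n =>
          ∑' j : ℕ, f' (S (min (π n j) t)) * (S (min (π n (j + 1)) t) - S (min (π n j) t)))
        atTop (nhds I) ∧
      f (S t) = f (S 0) + I
        + ((∫ u, L t u ∂g.measure) - ∫ u, L t u ∂h.measure) := by
  obtain ⟨x, hx_def⟩ : ∃ x : ℕ → ℕ → ℝ, ∀ n j, x n j = S (min (π n j) t) :=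
    ⟨_, fun _ _ => rfl⟩
  obtain ⟨lo, hi, hK⟩ : ∃ lo hi, S '' Icc 0 t ⊆ Icc lo hi :=
    bddBelow_bddAbove_iff_subset_Icc.1
      ⟨(isCompact_Icc.image hS).bddBelow, (isCompact_Icc.image hS).bddAbove⟩
  have hx : ∀ n j, x n j ∈ Icc lo hi := fun n j =>
    hK ⟨_, ⟨le_min (hπ0 n ▸ (hπmono n).monotone j.zero_le) ht, min_le_right _ _⟩,
      (hx_def n j).symm⟩
  choose N hN using fun n => eventually_atTop.1 ((hπtop n).eventually_ge_atTop t)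
  have hxN : ∀ n j, N n ≤ j → x n j = S t := fun n j hj => by
    rw [hx_def, min_eq_right (hN n j hj)]
  have hconst : ∀ n j, N n ≤ j → x n j = x n (N n) := fun n j hj =>
    (hxN n j hj).trans (hxN n _ le_rfl).symm
  have hRiemann : ∀ n, ∑' j, f' (x n j) * (x n (j + 1) - x n j)
      = f (S t) - f (S 0)
        - ((∫ u, seqLocalTime (x n) u ∂g.measure)
          - ∫ u, seqLocalTime (x n) u ∂h.measure) := by
    intro n
    rw [tsum_mul_sub_eq_sub_sub_integral_seqLocalTime g h hf'
      (eq_intervalIntegral_of_eq_ite hf) (hconst n), hxN n _ le_rfl, hx_def, hπ0, min_eq_left ht]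
  have hL : TendstoUniformly (fun n => seqLocalTime (x n)) (L t) atTop := by
    simpa only [discreteLocalTime_eq_seqLocalTime, ← hx_def] using hLconv t ht
  refine ⟨f (S t) - f (S 0) - ((∫ u, L t u ∂g.measure) - ∫ u, L t u ∂h.measure), ?_,
    by ring⟩
  have hlim (k : StieltjesFunction ℝ) :=
    tendsto_integral_seqLocalTime k.measure hx (fun n => ⟨N n, hconst n⟩) hL
  simp only [← hx_def, hRiemann]
  exact tendsto_const_nhds.sub ((hlim g).sub (hlim h))

/-- Pathwise generalized Itô (Tanaka) formula for paths with a continuous local time: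
if the discrete local times along `(π^n)` converge uniformly to a jointly continuous limit
`L`, and `f` is absolutely continuous with right-continuous derivative `f' = g - h` of
locally bounded variation (`g, h` Stieltjes functions, `df' = dg - dh`), then the Riemann
sums of `f'(S)` along `(π^n)` converge, and the limit `∫_0^t f'(S) dS` satisfies
`f(S(t)) = f(S(0)) + ∫_0^t f'(S(s)) dS(s) + ∫_ℝ L_t(u) df'(u)`. -/
theorem pathwise_generalized_ito
    (S : ℝ → ℝ) (hS : Continuous S)
    (π : ℕ → ℕ → ℝ)
    (hπ0 : ∀ n, π n 0 = 0) (hπmono : ∀ n, StrictMono (π n))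
    (hπtop : ∀ n, Tendsto (π n) atTop atTop)
    (hmesh : ∀ t : ℝ, 0 ≤ t →
      Tendsto (fun n => ⨆ j : ℕ, |S (min (π n (j + 1)) t) - S (min (π n j) t)|)
        atTop (nhds 0))
    (L : ℝ → ℝ → ℝ)
    (hLconv : ∀ t : ℝ, 0 ≤ t →
      TendstoUniformly (fun n u => discreteLocalTime S (π n) t u) (L t) atTop)
    (hLcont : Continuous fun p : ℝ × ℝ => L p.1 p.2)
    (g h : StieltjesFunction ℝ) (f' f : ℝ → ℝ)
    (hf' : ∀ x, f' x = g x - h x)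
    (hf : ∀ x, f x = if 0 ≤ x then ∫ y in Set.Ioc 0 x, f' y else -∫ y in Set.Ioc x 0, f' y)
    (t : ℝ) (ht : 0 ≤ t) :
    ∃ I : ℝ,
      Tendsto (fun n =>
          ∑' j : ℕ, f' (S (min (π n j) t)) * (S (min (π n (j + 1)) t) - S (min (π n j) t)))
        atTop (nhds I) ∧
      f (S t) = f (S 0) + I
        + ((∫ u, L t u ∂g.measure) - ∫ u, L t u ∂h.measure) :=
  pathwise_generalized_ito_general S hS π hπ0 hπmono hπtop L hLconv g h f' f hf' hf t ht
end

section
/- Under the hypotheses of the pathwise generalized Itô formula with continuous local time (S continuous with discrete local times along (π^n) converging uniformly to a jointly continuous limit L), the pathwise Tanaka–Meyer formula holds: for all t ≥ 0 and u ∈ ℝ, L_t(u) = (S(t) − u)^− − (S(0) − u)^− + ∫_0^t 1_{(−∞,u)}(S(s)) dS(s), where the integral is the limit of Riemann sums ∑_{t_j ∈ π^n} 1_{(−∞,u)}(S(t_j))(S(t_{j+1}∧t) − S(t_j∧t)). -/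
open Set Filter Classical

/-! Each step of the discrete local time satisfies the one-step Tanaka identity
`1_{⦇a,b⦈}(u) |b - u| = (u - b)⁺ - (u - a)⁺ + 1_{a < u} (b - a)`.
Summed along a partition these telescope, so the Riemann sums equal the discrete local time
minus `(S(t) - u)⁻ - (S(0) - u)⁻`, and their limit exists because that of the discrete local
times does. -/

lemma ite_mem_hook_abs_sub_eq (a b u : ℝ) :
    (if u ∈ hook a b then |b - u| else 0) =
      (max 0 (u - b) - max 0 (u - a)) + (if a < u then (1 : ℝ) else 0) * (b - a) := by
  unfold hook
  rcases le_total (u - a) 0 with ha | ha <;> rcases le_total (u - b) 0 with hb | hb <;>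
    split_ifs <;>
    simp_all [Set.mem_Ioc, abs_of_nonneg, abs_of_nonpos, sub_nonneg] <;>
    linarith

lemma tsum_increments_eq_sum_range {f : ℕ → ℝ} {N : ℕ} {c : ℝ} (hf : ∀ j, N ≤ j → f j = c)
    (g : ℝ → ℝ → ℝ) (hg : g c c = 0) :
    ∑' j, g (f j) (f (j + 1)) = ∑ j ∈ Finset.range N, g (f j) (f (j + 1)) := by
  refine tsum_eq_sum fun j hj => ?_
  rw [Finset.mem_range, not_lt] at hj
  rw [hf j hj, hf (j + 1) (hj.trans j.le_succ), hg]

lemma tsum_indicator_mul_increment_eq {f : ℕ → ℝ} {N : ℕ} {c : ℝ}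
    (hf : ∀ j, N ≤ j → f j = c) (u : ℝ) :
    ∑' j, (if f j < u then (1 : ℝ) else 0) * (f (j + 1) - f j) =
      (∑' j, if u ∈ hook (f j) (f (j + 1)) then |f (j + 1) - u| else 0)
        - max 0 (u - c) + max 0 (u - f 0) := by
  rw [tsum_increments_eq_sum_range hf (fun a b => (if a < u then (1 : ℝ) else 0) * (b - a))
      (by simp),
    tsum_increments_eq_sum_range hf (fun a b => if u ∈ hook a b then |b - u| else 0)
      (by simp [hook])]
  have htelescope := Finset.sum_range_sub (fun j => max 0 (u - f j)) N
  simp only [ite_mem_hook_abs_sub_eq, Finset.sum_add_distrib, htelescope, hf N le_rfl]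
  ring

lemma riemannSum_eq_discreteLocalTime_sub (S : ℝ → ℝ) {τ : ℕ → ℝ} (hτ0 : τ 0 = 0)
    (hτtop : Tendsto τ atTop atTop) {t : ℝ} (ht : 0 ≤ t) (u : ℝ) :
    ∑' j, (if S (min (τ j) t) < u then (1 : ℝ) else 0)
        * (S (min (τ (j + 1)) t) - S (min (τ j) t)) =
      discreteLocalTime S τ t u - max 0 (u - S t) + max 0 (u - S 0) := by
  obtain ⟨N, hN⟩ := eventually_atTop.mp (hτtop.eventually_ge_atTop t)
  have hconst : ∀ j, N ≤ j → S (min (τ j) t) = S t := fun j hj => by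
    rw [min_eq_right (hN j hj)]
  rw [tsum_indicator_mul_increment_eq hconst, hτ0, min_eq_left ht, discreteLocalTime]

theorem pathwise_tanaka_meyer_general
    (S : ℝ → ℝ)
    (π : ℕ → ℕ → ℝ)
    (hπ0 : ∀ n, π n 0 = 0)
    (hπtop : ∀ n, Tendsto (π n) atTop atTop)
    (L : ℝ → ℝ → ℝ)
    (hLconv : ∀ t : ℝ, 0 ≤ t →
      TendstoUniformly (fun n u => discreteLocalTime S (π n) t u) (L t) atTop)
    (t : ℝ) (ht : 0 ≤ t) (u : ℝ) :
    ∃ I : ℝ,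
      Tendsto (fun n =>
          ∑' j : ℕ, (if S (min (π n j) t) < u then (1 : ℝ) else 0)
            * (S (min (π n (j + 1)) t) - S (min (π n j) t)))
        atTop (nhds I) ∧
      L t u = max 0 (u - S t) - max 0 (u - S 0) + I := by
  refine ⟨L t u - max 0 (u - S t) + max 0 (u - S 0), ?_, by ring⟩
  have hlim := (((hLconv t ht).tendsto_at u).sub_const (max 0 (u - S t))).add_const
    (max 0 (u - S 0))
  simpa only [riemannSum_eq_discreteLocalTime_sub S (hπ0 _) (hπtop _) ht] using hlim

/-- Pathwise Tanaka–Meyer formula: if the discrete local times along `(π^n)` converge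
uniformly (in `u`, for each `t`) to a jointly continuous limit `L`, then for all `t ≥ 0`
and `u ∈ ℝ` the Riemann sums `∑_j 1_{(-∞,u)}(S(t_j))(S(t_{j+1}∧t) - S(t_j∧t))` converge to
a limit `I = ∫_0^t 1_{(-∞,u)}(S(s)) dS(s)` and
`L_t(u) = (S(t)-u)⁻ - (S(0)-u)⁻ + I`, where `(x)⁻ = max(0,-x)`. -/
theorem pathwise_tanaka_meyer
    (S : ℝ → ℝ) (hS : Continuous S)
    (π : ℕ → ℕ → ℝ)
    (hπ0 : ∀ n, π n 0 = 0) (hπmono : ∀ n, StrictMono (π n))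
    (hπtop : ∀ n, Tendsto (π n) atTop atTop)
    (hmesh : ∀ t : ℝ, 0 ≤ t →
      Tendsto (fun n => ⨆ j : ℕ, |S (min (π n (j + 1)) t) - S (min (π n j) t)|)
        atTop (nhds 0))
    (L : ℝ → ℝ → ℝ)
    (hLconv : ∀ t : ℝ, 0 ≤ t →
      TendstoUniformly (fun n u => discreteLocalTime S (π n) t u) (L t) atTop)
    (hLcont : Continuous fun p : ℝ × ℝ => L p.1 p.2)
    (t : ℝ) (ht : 0 ≤ t) (u : ℝ) :
    ∃ I : ℝ,
      Tendsto (fun n =>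
          ∑' j : ℕ, (if S (min (π n j) t) < u then (1 : ℝ) else 0)
            * (S (min (π n (j + 1)) t) - S (min (π n j) t)))
        atTop (nhds I) ∧
      L t u = max 0 (u - S t) - max 0 (u - S 0) + I :=
  pathwise_tanaka_meyer_general S π hπ0 hπtop L hLconv t ht u
end

section
/- If f_n : ℝ → ℝ is a sequence of functions with uniformly bounded p-variation (sup_n ‖f_n‖_{p-var} ≤ M < ∞ for some p ≥ 1) converging uniformly to f, then for every p′ > p the sequence f_n converges to f in p′-variation, i.e. ‖f_n − f‖_{p′-var} → 0. -/
/-!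
The `p'`-variation sum of `f_n - f` over a partition is at most `(2 sup |f_n - f|)^(p' - p)` times
its `p`-variation sum, because every increment of `f_n - f` is at most `2 sup |f_n - f|`. The
`p`-variation of `f_n - f` stays bounded, since by lower semicontinuity `‖f‖_{p-var} ≤ M` and
`‖·‖_{p-var}` is a seminorm for `p ≥ 1`, while `sup |f_n - f| → 0`.
-/

open Filter ENNReal

/-- The `p`-variation (semi)norm of `g : ℝ → ℝ`, valued in `ℝ≥0∞`:
the supremum over all finite increasing sequences `u_0 < … < u_n` of
`(∑_k |g(u_k) - g(u_{k-1})|^p)^{1/p}`. -/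
noncomputable def pVar (p : ℝ) (g : ℝ → ℝ) : ℝ≥0∞ :=
  ⨆ (n : ℕ) (u : ℕ → ℝ) (_ : ∀ k < n, u k < u (k + 1)),
    (∑ k ∈ Finset.range n, (ENNReal.ofReal |g (u (k + 1)) - g (u k)|) ^ p) ^ (1 / p)

open Topology

noncomputable def pVarSum (p : ℝ) (g : ℝ → ℝ) (n : ℕ) (u : ℕ → ℝ) : ℝ≥0∞ :=
  ∑ k ∈ Finset.range n, ENNReal.ofReal |g (u (k + 1)) - g (u k)| ^ p

theorem pVar_eq_iSup_pVarSum (p : ℝ) (g : ℝ → ℝ) :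
    pVar p g =
      ⨆ (n : ℕ) (u : ℕ → ℝ) (_ : ∀ k < n, u k < u (k + 1)), pVarSum p g n u ^ (1 / p) :=
  rfl

section

variable {p : ℝ} {g : ℝ → ℝ} {n : ℕ} {u : ℕ → ℝ}

theorem pVarSum_rpow_le_pVar (hu : ∀ k < n, u k < u (k + 1)) :
    pVarSum p g n u ^ (1 / p) ≤ pVar p g := by
  rw [pVar_eq_iSup_pVarSum]
  exact le_iSup₂_of_le n u (le_iSup_of_le hu le_rfl)

theorem pVarSum_le_pVar_rpow (hp : 0 < p) (hu : ∀ k < n, u k < u (k + 1)) :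
    pVarSum p g n u ≤ pVar p g ^ p := by
  calc pVarSum p g n u = (pVarSum p g n u ^ (1 / p)) ^ p := by
        rw [← ENNReal.rpow_mul, one_div_mul_cancel hp.ne', ENNReal.rpow_one]
    _ ≤ pVar p g ^ p := ENNReal.rpow_le_rpow (pVarSum_rpow_le_pVar hu) hp.le

theorem pVar_le_of_forall_pVarSum_le (hp : 0 ≤ p) {C : ℝ≥0∞}
    (hC : ∀ n u, (∀ k < n, u k < u (k + 1)) → pVarSum p g n u ≤ C) :
    pVar p g ≤ C ^ (1 / p) := by
  rw [pVar_eq_iSup_pVarSum]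
  exact iSup₂_le fun n u => iSup_le fun hu =>
    ENNReal.rpow_le_rpow (hC n u hu) (one_div_nonneg.2 hp)

theorem tendsto_pVarSum {ι : Type*} {l : Filter ι} {f : ι → ℝ → ℝ}
    (hf : ∀ x, Tendsto (fun i => f i x) l (𝓝 (g x))) :
    Tendsto (fun i => pVarSum p (f i) n u) l (𝓝 (pVarSum p g n u)) :=
  tendsto_finsetSum _ fun _ _ => (ENNReal.continuous_rpow_const.tendsto _).comp
    (ENNReal.tendsto_ofReal ((hf _).sub (hf _)).abs)

theorem pVar_le_of_tendsto {ι : Type*} {l : Filter ι} [l.NeBot] {f : ι → ℝ → ℝ}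
    {C : ℝ≥0∞} (hf : ∀ x, Tendsto (fun i => f i x) l (𝓝 (g x)))
    (hC : ∀ᶠ i in l, pVar p (f i) ≤ C) :
    pVar p g ≤ C := by
  rw [pVar_eq_iSup_pVarSum]
  refine iSup₂_le fun n u => iSup_le fun hu => le_of_tendsto ?_
    (hC.mono fun i hi => (pVarSum_rpow_le_pVar hu).trans hi)
  exact (ENNReal.continuous_rpow_const.tendsto _).comp (tendsto_pVarSum hf)

theorem pVar_sub_le (hp : 1 ≤ p) (g h : ℝ → ℝ) :
    pVar p (fun x => g x - h x) ≤ pVar p g + pVar p h := by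
  rw [pVar_eq_iSup_pVarSum]
  refine iSup₂_le fun n u => iSup_le fun hu => ?_
  have hinc : ∀ k, ENNReal.ofReal |(g (u (k + 1)) - h (u (k + 1))) - (g (u k) - h (u k))|
      ≤ ENNReal.ofReal |g (u (k + 1)) - g (u k)| + ENNReal.ofReal |h (u (k + 1)) - h (u k)| :=
    fun k => by
      rw [sub_sub_sub_comm]
      exact (ENNReal.ofReal_le_ofReal (abs_sub _ _)).trans ENNReal.ofReal_add_le
  calc pVarSum p (fun x => g x - h x) n u ^ (1 / p)
      ≤ (∑ k ∈ Finset.range n, (ENNReal.ofReal |g (u (k + 1)) - g (u k)|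
          + ENNReal.ofReal |h (u (k + 1)) - h (u k)|) ^ p) ^ (1 / p) := by
        unfold pVarSum
        gcongr with k
        exact hinc k
    _ ≤ pVarSum p g n u ^ (1 / p) + pVarSum p h n u ^ (1 / p) := ENNReal.Lp_add_le _ _ _ hp
    _ ≤ pVar p g + pVar p h := add_le_add (pVarSum_rpow_le_pVar hu) (pVarSum_rpow_le_pVar hu)

theorem pVar_le_of_abs_le {p' δ : ℝ} (hp : 0 < p) (hpp' : p ≤ p') (hg : ∀ x, |g x| ≤ δ) :
    pVar p' g ≤ (ENNReal.ofReal (2 * δ) ^ (p' - p) * pVar p g ^ p) ^ (1 / p') := by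
  refine pVar_le_of_forall_pVarSum_le (hp.le.trans hpp') fun n u hu => ?_
  have hterm : ∀ k, ENNReal.ofReal |g (u (k + 1)) - g (u k)| ^ p'
      ≤ ENNReal.ofReal (2 * δ) ^ (p' - p) * ENNReal.ofReal |g (u (k + 1)) - g (u k)| ^ p := by
    intro k
    have hinc : ENNReal.ofReal |g (u (k + 1)) - g (u k)| ≤ ENNReal.ofReal (2 * δ) :=
      ENNReal.ofReal_le_ofReal ((abs_sub _ _).trans (by linarith [hg (u (k + 1)), hg (u k)]))
    conv_lhs =>
      rw [← sub_add_cancel p' p, ENNReal.rpow_add_of_nonneg _ _ (sub_nonneg.2 hpp') hp.le]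
    gcongr
  calc pVarSum p' g n u
      ≤ ∑ k ∈ Finset.range n,
          ENNReal.ofReal (2 * δ) ^ (p' - p) * ENNReal.ofReal |g (u (k + 1)) - g (u k)| ^ p :=
        Finset.sum_le_sum fun k _ => hterm k
    _ = ENNReal.ofReal (2 * δ) ^ (p' - p) * pVarSum p g n u := (Finset.mul_sum _ _ _).symm
    _ ≤ ENNReal.ofReal (2 * δ) ^ (p' - p) * pVar p g ^ p := by
        gcongr
        exact pVarSum_le_pVar_rpow hp hu

end

theorem tendsto_pVar_sub_of_tendstoUniformly {ι : Type*} {l : Filter ι} {p p' : ℝ}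
    {f : ι → ℝ → ℝ} {g : ℝ → ℝ} {C : ℝ≥0∞} (hp : 0 < p) (hpp' : p < p') (hC : C ≠ ⊤)
    (hbdd : ∀ i, pVar p (fun x => f i x - g x) ≤ C) (hfg : TendstoUniformly f g l) :
    Tendsto (fun i => pVar p' (fun x => f i x - g x)) l (𝓝 0) := by
  set B : ℝ → ℝ≥0∞ := fun t => (ENNReal.ofReal (2 * t) ^ (p' - p) * C ^ p) ^ (1 / p')
  have hB : Tendsto B (𝓝 0) (𝓝 0) := by
    have hbase : Tendsto (fun t : ℝ => ENNReal.ofReal (2 * t) ^ (p' - p)) (𝓝 0) (𝓝 0) :=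
      (ENNReal.continuous_rpow_const.comp (ENNReal.continuous_ofReal.comp
        (continuous_const_mul 2))).tendsto' 0 0 (by simp [sub_pos.2 hpp'])
    have hmul :=
      ENNReal.Tendsto.mul_const hbase (Or.inr (ENNReal.rpow_ne_top_of_nonneg hp.le hC))
    rw [zero_mul] at hmul
    exact (ENNReal.continuous_rpow_const.tendsto' 0 0 (by simp [hp.trans hpp'])).comp hmul
  have hbound : ∀ t > 0, ∀ᶠ i in l, pVar p' (fun x => f i x - g x) ≤ B t := by
    intro t ht
    filter_upwards [Metric.tendstoUniformly_iff.1 hfg t ht] with i hi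
    have hsup : ∀ x, |f i x - g x| ≤ t := fun x => by
      rw [abs_sub_comm, ← Real.dist_eq]
      exact (hi x).le
    calc pVar p' (fun x => f i x - g x)
        ≤ (ENNReal.ofReal (2 * t) ^ (p' - p) * pVar p (fun x => f i x - g x) ^ p) ^ (1 / p') :=
          pVar_le_of_abs_le hp hpp'.le hsup
      _ ≤ B t := by
          have hp' : 0 < p' := hp.trans hpp'
          simp only [B]
          gcongr
          exact hbdd i
  refine ENNReal.tendsto_nhds_zero.2 fun ε hε => ?_
  obtain ⟨t, htε, ht⟩ :=
    ((hB.mono_left nhdsWithin_le_nhds).eventually (eventually_le_nhds hε)).and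
      (self_mem_nhdsWithin (s := Set.Ioi 0)) |>.exists
  exact (hbound t ht).mono fun i hi => hi.trans htε

/-- If `f_n → f` uniformly with uniformly bounded `p`-variation, then `f_n → f` in
`p'`-variation for every `p' > p`. -/
theorem tendsto_pVar_of_uniform
    (p : ℝ) (hp : 1 ≤ p) (f : ℕ → ℝ → ℝ) (flim : ℝ → ℝ) (M : ℝ)
    (hbdd : ∀ n, pVar p (f n) ≤ ENNReal.ofReal M)
    (hconv : TendstoUniformly f flim atTop) :
    ∀ p' : ℝ, p < p' →
      Tendsto (fun n => pVar p' (fun x => f n x - flim x)) atTop (nhds 0) := by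
  intro p' hpp'
  have hflim : pVar p flim ≤ ENNReal.ofReal M :=
    pVar_le_of_tendsto hconv.tendsto_at (Eventually.of_forall hbdd)
  exact tendsto_pVar_sub_of_tendstoUniformly (by linarith) hpp'
    (ENNReal.add_ne_top.2 ⟨ENNReal.ofReal_ne_top, ENNReal.ofReal_ne_top⟩)
    (fun n => (pVar_sub_le hp _ _).trans (add_le_add (hbdd n) hflim)) hconv
end

section
/- Let a_n be real numbers with sup over u of |I^n(u) − I^{n−1}(u)| ≤ C·2^{−nα} for all n ≥ 1 and sup over |u−v| ≤ 2^{−n} of |I^n(v) − I^n(u)| ≤ C·2^{−nα} for all n, where each I^n : ℝ → ℝ is constant on dyadic intervals of length 2^{−n} and α ∈ (0,1). Then there exists a constant C′ (depending only on C and α) such that for all n and all u, v with 2^{−n} ≤ |u − v| ≤ 1 one has |I^n(v) − I^n(u)| ≤ C′ |v − u|^α. Consequently sup_n ‖I^n‖_{(1/α)-var, [−K,K]} < ∞ for every K > 0. -/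
open Filter ENNReal

/-- The `p`-variation of `g` on the interval `[a,b]`, valued in `ℝ≥0∞`. -/
noncomputable def pVarOn (p : ℝ) (g : ℝ → ℝ) (a b : ℝ) : ℝ≥0∞ :=
  ⨆ (n : ℕ) (u : ℕ → ℝ) (_ : ∀ k < n, u k < u (k + 1)) (_ : ∀ k ≤ n, u k ∈ Set.Icc a b),
    (∑ k ∈ Finset.range n, (ENNReal.ofReal |g (u (k + 1)) - g (u k)|) ^ p) ^ (1 / p)

/-- `g` is constant on all dyadic intervals `[k2^{-n}, (k+1)2^{-n})`. -/
def DyadicStep (n : ℕ) (g : ℝ → ℝ) : Prop :=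
  ∀ k : ℤ, ∀ u ∈ Set.Ico ((k : ℝ) * 2 ^ (-(n : ℝ))) (((k : ℝ) + 1) * 2 ^ (-(n : ℝ))),
    ∀ v ∈ Set.Ico ((k : ℝ) * 2 ^ (-(n : ℝ))) (((k : ℝ) + 1) * 2 ^ (-(n : ℝ))), g u = g v

/-!
Telescoping `h1` over the levels shows that `I n` stays within `O(2^{-(m+1)α})` of `I m` for
`m ≤ n`. If `2^{-n} ≤ |u - v| ≤ 1`, choose the level `m ≤ n` with `2^{-m} ≈ |u - v|`: there `h2`
bounds the increment of `I m` by `C 2^{-mα} ≈ C |u - v|^α`, and the two telescoping errors are of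
the same size. Gaps longer than `1` are handled by chaining unit steps at level `0`, which costs
a linear bound.

For the variation, `I n` only sees the grid point `⌊x 2^n⌋ 2^{-n}` below its argument, and two
distinct grid points are at least `2^{-n}` apart, so both bounds apply to them. Raised to the power
`1/α`, they make each increment of `I n` over `[a, b]` at most `M` times the increment of that grid
projection, with `M` independent of `n`; summing over a partition, the right side telescopes.
-/

open Finset

theorem abs_sub_le_of_abs_succ_sub_le_geometric {f : ℕ → ℝ} {C r : ℝ} (hC : 0 ≤ C)
    (hr0 : 0 ≤ r) (hr1 : r < 1) (hf : ∀ k, |f (k + 1) - f k| ≤ C * r ^ (k + 1))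
    {m n : ℕ} (hmn : m ≤ n) : |f n - f m| ≤ C * r ^ (m + 1) / (1 - r) :=
  calc |f n - f m| = dist (f m) (f n) := by rw [Real.dist_eq, abs_sub_comm]
    _ ≤ ∑ k ∈ Ico m n, C * r * r ^ k := dist_le_Ico_sum_of_dist_le hmn fun _ _ => by
        rw [Real.dist_eq, abs_sub_comm, mul_assoc, ← pow_succ']
        exact hf _
    _ = C * r * ∑ k ∈ Ico m n, r ^ k := (mul_sum ..).symm
    _ ≤ C * r * (r ^ m / (1 - r)) := by
        gcongr
        exact geom_sum_Ico_le_of_lt_one hr0 hr1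
    _ = C * r ^ (m + 1) / (1 - r) := by ring

theorem abs_sub_le_abs_sub_add_of_abs_succ_sub_le_geometric {I : ℕ → ℝ → ℝ} {C r : ℝ}
    (hC : 0 ≤ C) (hr0 : 0 ≤ r) (hr1 : r < 1)
    (h1 : ∀ k u, |I (k + 1) u - I k u| ≤ C * r ^ (k + 1)) {m n : ℕ} (hmn : m ≤ n) (u v : ℝ) :
    |I n v - I n u| ≤ |I m v - I m u| + 2 * (C * r ^ (m + 1) / (1 - r)) := by
  have hu := abs_sub_le_of_abs_succ_sub_le_geometric (f := (I · u)) hC hr0 hr1 (h1 · u) hmn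
  have hv := abs_sub_le_of_abs_succ_sub_le_geometric (f := (I · v)) hC hr0 hr1 (h1 · v) hmn
  calc |I n v - I n u| = |(I n v - I m v) + (I m v - I m u) + (I m u - I n u)| := by
        congr 1; ring
    _ ≤ |I n v - I m v| + |I m v - I m u| + |I m u - I n u| := abs_add_three _ _ _
    _ ≤ _ := by rw [abs_sub_comm (I m u)]; linarith

theorem exists_two_rpow_neg_mem_Icc {n : ℕ} {d : ℝ} (hn : (2 : ℝ) ^ (-(n : ℝ)) ≤ d)
    (hd : d ≤ 1) : ∃ m ≤ n, d ≤ (2 : ℝ) ^ (-(m : ℝ)) ∧ (2 : ℝ) ^ (-(m : ℝ)) ≤ 2 * d := by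
  induction n with
  | zero =>
    simp only [CharP.cast_eq_zero, neg_zero, Real.rpow_zero] at hn
    exact ⟨0, le_rfl, by simpa using hd, by simp; linarith⟩
  | succ n ih =>
    by_cases hdn : (2 : ℝ) ^ (-(n : ℝ)) ≤ d
    · obtain ⟨m, hmn, hm⟩ := ih hdn
      exact ⟨m, hmn.trans n.le_succ, hm⟩
    · have halve : (2 : ℝ) ^ (-(n : ℝ)) = 2 * 2 ^ (-((n + 1 : ℕ) : ℝ)) := by
        rw [Nat.cast_succ, neg_add, Real.rpow_add two_pos, Real.rpow_neg_one]; ring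
      exact ⟨n, n.le_succ, (not_le.1 hdn).le, by linarith⟩

theorem abs_sub_le_two_mul_mul_sub_of_abs_sub_le_one {g : ℝ → ℝ} {C : ℝ}
    (hg : ∀ u v, |u - v| ≤ 1 → |g v - g u| ≤ C) {u v : ℝ} (huv : 1 ≤ v - u) :
    |g v - g u| ≤ 2 * C * (v - u) := by
  have hC : 0 ≤ C := by simpa using hg u u (by simp)
  set N := ⌈v - u⌉₊
  have hN : (0 : ℝ) < N := Nat.cast_pos.2 (Nat.ceil_pos.2 (by linarith))
  have hN2 : (N : ℝ) ≤ 2 * (v - u) := by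
    have := Nat.ceil_lt_add_one (a := v - u) (by linarith); linarith
  set s := (v - u) / N
  have hs : |s| ≤ 1 := by
    rw [abs_of_nonneg (by positivity), div_le_one hN]; exact Nat.le_ceil _
  calc |g v - g u| = dist (g (u + (0 : ℕ) * s)) (g (u + N * s)) := by
        rw [Real.dist_eq, abs_sub_comm]; simp [s, mul_div_cancel₀ _ hN.ne']
    _ ≤ ∑ _i ∈ range N, C :=
        dist_le_range_sum_of_dist_le (f := fun i : ℕ => g (u + i * s)) (d := fun _ => C) N
          fun _ => by
            rw [Real.dist_eq, abs_sub_comm]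
            exact hg _ _ (by push_cast; ring_nf; rwa [abs_neg])
    _ = C * N := by simp [mul_comm]
    _ ≤ 2 * C * (v - u) := by nlinarith

theorem two_rpow_neg_natCast_mul (n : ℕ) (α : ℝ) :
    (2 : ℝ) ^ (-(n : ℝ) * α) = ((2 : ℝ) ^ (-α)) ^ n := by
  rw [← Real.rpow_natCast, ← Real.rpow_mul zero_le_two]; ring_nf

theorem two_rpow_neg_lt_one {α : ℝ} (hα : 0 < α) : (2 : ℝ) ^ (-α) < 1 :=
  Real.rpow_lt_one_of_one_lt_of_neg one_lt_two (neg_neg_of_pos hα)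

section DyadicIncrements

variable {C α : ℝ} {I : ℕ → ℝ → ℝ}

theorem abs_sub_le_mul_abs_sub_rpow (hC : 0 ≤ C) (hα0 : 0 < α) (hα1 : α ≤ 1)
    (h1 : ∀ n u, |I (n + 1) u - I n u| ≤ C * ((2 : ℝ) ^ (-α)) ^ (n + 1))
    (h2 : ∀ (n : ℕ) u v, |u - v| ≤ (2 : ℝ) ^ (-(n : ℝ)) →
      |I n v - I n u| ≤ C * ((2 : ℝ) ^ (-α)) ^ n)
    {n : ℕ} {u v : ℝ} (hn : (2 : ℝ) ^ (-(n : ℝ)) ≤ |u - v|) (huv : |u - v| ≤ 1) :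
    |I n v - I n u| ≤ 6 * C / (1 - (2 : ℝ) ^ (-α)) * |v - u| ^ α := by
  set r := (2 : ℝ) ^ (-α)
  have hr0 : 0 < r := by positivity
  have hr1 : 0 < 1 - r := sub_pos.2 (two_rpow_neg_lt_one hα0)
  obtain ⟨m, hmn, hdm, hmd⟩ := exists_two_rpow_neg_mem_Icc hn huv
  have hrm : r ^ m ≤ 2 * |v - u| ^ α :=
    calc r ^ m = ((2 : ℝ) ^ (-(m : ℝ))) ^ α := by
          rw [← two_rpow_neg_natCast_mul, ← Real.rpow_mul zero_le_two]
      _ ≤ (2 * |u - v|) ^ α := by gcongr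
      _ = 2 ^ α * |v - u| ^ α := by rw [Real.mul_rpow zero_le_two (abs_nonneg _), abs_sub_comm]
      _ ≤ 2 * |v - u| ^ α := by
          gcongr
          simpa using Real.rpow_le_rpow_of_exponent_le one_le_two hα1
  have hrm1 : r ^ (m + 1) ≤ r ^ m := pow_le_pow_of_le_one hr0.le (by linarith) m.le_succ
  calc |I n v - I n u| ≤ |I m v - I m u| + 2 * (C * r ^ (m + 1) / (1 - r)) :=
        abs_sub_le_abs_sub_add_of_abs_succ_sub_le_geometric hC hr0.le (by linarith) h1 hmn u v
    _ ≤ C * r ^ m / (1 - r) + 2 * (C * r ^ m / (1 - r)) := by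
        gcongr
        exact (h2 m u v hdm).trans (le_div_self (by positivity) hr1 (by linarith))
    _ = 3 * C / (1 - r) * r ^ m := by ring
    _ ≤ 3 * C / (1 - r) * (2 * |v - u| ^ α) := by gcongr
    _ = 6 * C / (1 - r) * |v - u| ^ α := by ring

theorem abs_sub_le_mul_sub_of_one_le (hC : 0 ≤ C) (hα0 : 0 < α)
    (h1 : ∀ n u, |I (n + 1) u - I n u| ≤ C * ((2 : ℝ) ^ (-α)) ^ (n + 1))
    (h2 : ∀ (n : ℕ) u v, |u - v| ≤ (2 : ℝ) ^ (-(n : ℝ)) →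
      |I n v - I n u| ≤ C * ((2 : ℝ) ^ (-α)) ^ n)
    {n : ℕ} {u v : ℝ} (huv : 1 ≤ v - u) :
    |I n v - I n u| ≤ 2 * C / (1 - (2 : ℝ) ^ (-α)) * (v - u) := by
  set r := (2 : ℝ) ^ (-α)
  have hr0 : 0 < r := by positivity
  have hr1 : 0 < 1 - r := sub_pos.2 (two_rpow_neg_lt_one hα0)
  have h0 : |I 0 v - I 0 u| ≤ 2 * C * (v - u) :=
    abs_sub_le_two_mul_mul_sub_of_abs_sub_le_one
      (fun u v h => by simpa using h2 0 u v (by simpa using h)) huv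
  calc |I n v - I n u| ≤ |I 0 v - I 0 u| + 2 * (C * r ^ (0 + 1) / (1 - r)) :=
        abs_sub_le_abs_sub_add_of_abs_succ_sub_le_geometric hC hr0.le (by linarith) h1
          n.zero_le u v
    _ ≤ 2 * C * (v - u) + 2 * (C * r / (1 - r)) * (v - u) := by
        rw [zero_add, pow_one]
        exact add_le_add h0 (le_mul_of_one_le_right (by positivity) huv)
    _ = 2 * C / (1 - r) * (v - u) := by field_simp; ring

end DyadicIncrements

noncomputable def gridFloor (δ x : ℝ) : ℝ := ⌊x / δ⌋ * δ

section GridFloor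

variable {δ : ℝ}

theorem gridFloor_le (hδ : 0 < δ) (x : ℝ) : gridFloor δ x ≤ x := by
  rw [gridFloor, ← le_div_iff₀ hδ]
  exact Int.floor_le _

theorem sub_lt_gridFloor (hδ : 0 < δ) (x : ℝ) : x - δ < gridFloor δ x := by
  have h := Int.lt_floor_add_one (x / δ)
  rw [div_lt_iff₀ hδ] at h
  rw [gridFloor]
  linarith

theorem gridFloor_mono (hδ : 0 ≤ δ) : Monotone (gridFloor δ) := fun x y hxy => by
  unfold gridFloor
  gcongr

theorem le_gridFloor_sub_gridFloor (hδ : 0 < δ) {x y : ℝ} (h : gridFloor δ x < gridFloor δ y) :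
    δ ≤ gridFloor δ y - gridFloor δ x := by
  unfold gridFloor at *
  have hlt : ⌊x / δ⌋ < ⌊y / δ⌋ := by exact_mod_cast lt_of_mul_lt_mul_right h hδ.le
  have hone : (1 : ℝ) ≤ ⌊y / δ⌋ - ⌊x / δ⌋ := by exact_mod_cast Int.sub_pos_of_lt hlt
  rw [← sub_mul]
  exact le_mul_of_one_le_left hδ.le hone

theorem DyadicStep.apply_gridFloor {n : ℕ} {g : ℝ → ℝ} (hg : DyadicStep n g) (x : ℝ) :
    g (gridFloor (2 ^ (-(n : ℝ))) x) = g x := by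
  have hδ : (0 : ℝ) < 2 ^ (-(n : ℝ)) := by positivity
  have hle := gridFloor_le hδ x
  have hlt := sub_lt_gridFloor hδ x
  unfold gridFloor at *
  exact (hg _ x ⟨hle, by linarith⟩ _ ⟨le_rfl, by linarith⟩).symm

end GridFloor

theorem pVarOn_le_of_rpow_abs_sub_le {p : ℝ} (hp : 0 < p) {g φ : ℝ → ℝ} {a b : ℝ}
    (hg : ∀ u ∈ Set.Icc a b, ∀ v ∈ Set.Icc a b, u ≤ v → |g v - g u| ^ p ≤ φ v - φ u) :
    pVarOn p g a b ≤ ENNReal.ofReal (φ b - φ a) ^ (1 / p) := by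
  refine iSup_le fun N => iSup_le fun u => iSup_le fun hu => iSup_le fun huab => ?_
  have hφ : ∀ x ∈ Set.Icc a b, ∀ y ∈ Set.Icc a b, x ≤ y → φ x ≤ φ y :=
    fun x hx y hy hxy =>
      sub_nonneg.1 ((Real.rpow_nonneg (abs_nonneg _) p).trans (hg x hx y hy hxy))
  have hab : a ≤ b := (huab 0 N.zero_le).1.trans (huab 0 N.zero_le).2
  gcongr
  calc ∑ k ∈ range N, ENNReal.ofReal |g (u (k + 1)) - g (u k)| ^ p
        = ENNReal.ofReal (∑ k ∈ range N, |g (u (k + 1)) - g (u k)| ^ p) := by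
          rw [ENNReal.ofReal_sum_of_nonneg fun _ _ => by positivity]
          exact sum_congr rfl fun k _ => ENNReal.ofReal_rpow_of_nonneg (abs_nonneg _) hp.le
    _ ≤ ENNReal.ofReal (∑ k ∈ range N, (φ (u (k + 1)) - φ (u k))) := by
        gcongr with k hk
        rw [mem_range] at hk
        exact hg _ (huab k hk.le) _ (huab (k + 1) hk) (hu k hk).le
    _ = ENNReal.ofReal (φ (u N) - φ (u 0)) := by rw [sum_range_sub (fun k => φ (u k))]
    _ ≤ ENNReal.ofReal (φ b - φ a) := by
        gcongr
        · exact hφ _ (huab N le_rfl) b ⟨hab, le_rfl⟩ (huab N le_rfl).2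
        · exact hφ a ⟨le_rfl, hab⟩ _ (huab 0 N.zero_le) (huab 0 N.zero_le).1

section HolderIncrements

variable {g : ℝ → ℝ} {A L α δ : ℝ}

theorem rpow_abs_sub_le_mul_sub (hα0 : 0 < α) (hα1 : α ≤ 1) (hA0 : 0 ≤ A) (hL0 : 0 ≤ L)
    (hA : ∀ u v, δ ≤ |u - v| → |u - v| ≤ 1 → |g v - g u| ≤ A * |v - u| ^ α)
    (hL : ∀ u v, 1 ≤ v - u → |g v - g u| ≤ L * (v - u))
    (hδ : 0 < δ) {T u v : ℝ} (huv : δ ≤ v - u) (hT : v - u ≤ T) :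
    |g v - g u| ^ (1 / α) ≤ (A ^ (1 / α) + L ^ (1 / α) * T ^ (1 / α - 1)) * (v - u) := by
  set t := v - u
  have ht : 0 < t := hδ.trans_le huv
  have hT0 : 0 < T := ht.trans_le hT
  rcases le_or_gt t 1 with ht1 | ht1
  · have h := hA u v (by rwa [abs_sub_comm, abs_of_pos ht]) (by rwa [abs_sub_comm, abs_of_pos ht])
    rw [abs_of_pos ht] at h
    calc |g v - g u| ^ (1 / α) ≤ (A * t ^ α) ^ (1 / α) := by gcongr
      _ = A ^ (1 / α) * t := by
          rw [Real.mul_rpow hA0 (by positivity), ← Real.rpow_mul ht.le,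
            mul_one_div_cancel hα0.ne', Real.rpow_one]
      _ ≤ _ := by
          gcongr
          exact le_add_of_nonneg_right (by positivity)
  · have hp : 0 ≤ 1 / α - 1 := sub_nonneg.2 (one_le_one_div hα0 hα1)
    calc |g v - g u| ^ (1 / α) ≤ (L * t) ^ (1 / α) := by gcongr; exact hL u v ht1.le
      _ = L ^ (1 / α) * t ^ (1 / α - 1) * t := by
          rw [Real.mul_rpow hL0 ht.le, mul_assoc, ← Real.rpow_add_one ht.ne', sub_add_cancel]
      _ ≤ L ^ (1 / α) * T ^ (1 / α - 1) * t := by gcongr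
      _ ≤ _ := by
          gcongr
          exact le_add_of_nonneg_left (by positivity)

theorem pVarOn_le_of_holder_of_apply_gridFloor (hα0 : 0 < α) (hα1 : α ≤ 1) (hA0 : 0 ≤ A)
    (hL0 : 0 ≤ L) (hA : ∀ u v, δ ≤ |u - v| → |u - v| ≤ 1 → |g v - g u| ≤ A * |v - u| ^ α)
    (hL : ∀ u v, 1 ≤ v - u → |g v - g u| ≤ L * (v - u))
    (hδ : 0 < δ) (hδ1 : δ ≤ 1) (hgrid : ∀ x, g (gridFloor δ x) = g x) {a b : ℝ} (hab : a ≤ b) :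
    pVarOn (1 / α) g a b ≤ ENNReal.ofReal
      ((A ^ (1 / α) + L ^ (1 / α) * (b - a + 1) ^ (1 / α - 1)) * (b - a + 1)) ^ α := by
  set M := A ^ (1 / α) + L ^ (1 / α) * (b - a + 1) ^ (1 / α - 1)
  have hspan : ∀ x ∈ Set.Icc a b, ∀ y ∈ Set.Icc a b,
      gridFloor δ y - gridFloor δ x ≤ b - a + 1 := fun x hx y hy => by
    linarith [gridFloor_le hδ y, sub_lt_gridFloor hδ x, hx.1, hy.2]
  refine (pVarOn_le_of_rpow_abs_sub_le (by positivity) (φ := fun x => M * gridFloor δ x)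
    fun u hu v hv huv => ?_).trans ?_
  · rw [← hgrid u, ← hgrid v, ← mul_sub]
    rcases (gridFloor_mono hδ.le huv).eq_or_lt with h | h
    · rw [h, sub_self, abs_zero, Real.zero_rpow (by positivity), sub_self, mul_zero]
    · exact rpow_abs_sub_le_mul_sub hα0 hα1 hA0 hL0 hA hL hδ
        (le_gridFloor_sub_gridFloor hδ h) (hspan u hu v hv)
  · rw [one_div_one_div, ← mul_sub]
    gcongr
    exact hspan a ⟨le_rfl, hab⟩ b ⟨hab, le_rfl⟩

end HolderIncrements

/-- From the telescoping estimates on dyadic step approximations one gets a uniform Hölder-type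
bound at all scales, and hence a uniform bound on the `(1/α)`-variation on compacts. -/
theorem dyadic_holder_and_variation_bound
    (C α : ℝ) (hC : 0 < C) (hα : α ∈ Set.Ioo (0 : ℝ) 1)
    (I : ℕ → ℝ → ℝ)
    (hstep : ∀ n, DyadicStep n (I n))
    (h1 : ∀ n : ℕ, 1 ≤ n → ∀ u : ℝ,
      |I n u - I (n - 1) u| ≤ C * 2 ^ (-(n : ℝ) * α))
    (h2 : ∀ n : ℕ, ∀ u v : ℝ, |u - v| ≤ 2 ^ (-(n : ℝ)) →
      |I n v - I n u| ≤ C * 2 ^ (-(n : ℝ) * α)) :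
    ∃ C' : ℝ, 0 < C' ∧
      (∀ n : ℕ, ∀ u v : ℝ, 2 ^ (-(n : ℝ)) ≤ |u - v| → |u - v| ≤ 1 →
        |I n v - I n u| ≤ C' * |v - u| ^ α) ∧
      (∀ K : ℝ, 0 < K → ⨆ n : ℕ, pVarOn (1 / α) (I n) (-K) K < ⊤) := by
  obtain ⟨hα0, hα1⟩ := hα
  have hr1 : 0 < 1 - (2 : ℝ) ^ (-α) := sub_pos.2 (two_rpow_neg_lt_one hα0)
  have h1' : ∀ n u, |I (n + 1) u - I n u| ≤ C * ((2 : ℝ) ^ (-α)) ^ (n + 1) := fun n u => by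
    rw [← two_rpow_neg_natCast_mul]
    exact h1 (n + 1) n.succ_pos u
  have h2' : ∀ (n : ℕ) u v, |u - v| ≤ (2 : ℝ) ^ (-(n : ℝ)) →
      |I n v - I n u| ≤ C * ((2 : ℝ) ^ (-α)) ^ n := fun n u v huv => by
    rw [← two_rpow_neg_natCast_mul]
    exact h2 n u v huv
  have holder : ∀ n : ℕ, ∀ u v : ℝ, 2 ^ (-(n : ℝ)) ≤ |u - v| → |u - v| ≤ 1 →
      |I n v - I n u| ≤ 6 * C / (1 - (2 : ℝ) ^ (-α)) * |v - u| ^ α :=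
    fun n u v => abs_sub_le_mul_abs_sub_rpow hC.le hα0 hα1.le h1' h2'
  refine ⟨_, by positivity, holder, fun K hK => ?_⟩
  refine (iSup_le fun n => pVarOn_le_of_holder_of_apply_gridFloor hα0 hα1.le (by positivity)
    (by positivity) (holder n) (fun u v => abs_sub_le_mul_sub_of_one_le hC.le hα0 h1' h2')
    (by positivity) (Real.rpow_le_one_of_one_le_of_nonpos one_le_two (by simp))
    (hstep n).apply_gridFloor (by linarith)).trans_lt
    (ENNReal.rpow_lt_top_of_nonneg hα0.le ENNReal.ofReal_ne_top)
end

section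
/- A function f : ℝ → ℝ is absolutely continuous on compacts with a right-continuous Radon–Nikodym derivative f′ of locally bounded variation if and only if f is the difference of two convex functions. -/
/-!
A function of locally bounded variation is a difference `p - q` of monotone functions, and the
integral of a monotone function is convex (its slopes are averages of `p` over consecutive
intervals), so `f = (f 0 + ∫ p) - ∫ q`. Conversely a convex function on `ℝ` is continuous and
has a monotone, right-continuous right derivative from which it is recovered by the fundamental
theorem of calculus for one-sided derivatives; the difference of the right derivatives of `g` and
`h` is the required `f'`, of bounded variation as a difference of monotone functions.
-/

open Set MeasureTheory ENNReal

open Filter Topology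

lemma pVarOn_one_eq_eVariationOn (g : ℝ → ℝ) (a b : ℝ) :
    pVarOn 1 g a b = eVariationOn g (Icc a b) := by
  simp only [pVarOn, eVariationOn.eVariationOn_eq_strictMonoOn, div_one, ENNReal.rpow_one,
    edist_dist, Real.dist_eq]
  apply le_antisymm
  · refine iSup_le fun n ↦ iSup_le fun u ↦ iSup_le fun hu ↦ iSup_le fun hmem ↦ ?_
    exact le_iSup_of_le ⟨n, u, strictMonoOn_Iic_of_lt_succ hu, hmem⟩ le_rfl
  · refine iSup_le fun ⟨n, u, hu, hmem⟩ ↦ ?_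
    refine le_iSup_of_le n <| le_iSup_of_le u <| le_iSup_of_le (fun k hk ↦ ?_) <|
      le_iSup_of_le hmem le_rfl
    exact hu (mem_Iic.2 hk.le) (mem_Iic.2 hk) (Nat.lt_succ_self k)

lemma locallyBoundedVariationOn_univ_iff_pVarOn_one_lt_top (g : ℝ → ℝ) :
    LocallyBoundedVariationOn g univ ↔ ∀ a b, a < b → pVarOn 1 g a b < ⊤ := by
  simp only [LocallyBoundedVariationOn, BoundedVariationOn, univ_inter, mem_univ,
    forall_const, pVarOn_one_eq_eVariationOn, lt_top_iff_ne_top]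
  refine ⟨fun h a b _ ↦ h a b, fun h a b ↦ ?_⟩
  rcases lt_or_ge a b with hab | hba
  · exact h a b hab
  · rw [eVariationOn.subsingleton g (subsingleton_Icc_of_ge hba)]
    exact zero_ne_top

section Variation

variable {α E : Type*} [LinearOrder α] [SeminormedAddCommGroup E]

lemma eVariationOn_sub_le (f g : α → E) (s : Set α) :
    eVariationOn (f - g) s ≤ eVariationOn f s + eVariationOn g s := by
  refine iSup_le fun ⟨n, u, hu, hus⟩ ↦ ?_
  calc ∑ i ∈ Finset.range n, edist ((f - g) (u (i + 1))) ((f - g) (u i))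
      ≤ ∑ i ∈ Finset.range n,
          (edist (f (u (i + 1))) (f (u i)) + edist (g (u (i + 1))) (g (u i))) := by
        gcongr with i
        calc edist ((f - g) (u (i + 1))) ((f - g) (u i))
            ≤ edist (f (u (i + 1)) - g (u (i + 1))) (f (u i) - g (u (i + 1)))
              + edist (f (u i) - g (u (i + 1))) (f (u i) - g (u i)) := edist_triangle _ _ _
          _ = _ := by rw [edist_sub_right, edist_sub_left]
    _ ≤ eVariationOn f s + eVariationOn g s := by
      rw [Finset.sum_add_distrib]
      exact add_le_add (eVariationOn.sum_le hu hus) (eVariationOn.sum_le hu hus)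

lemma LocallyBoundedVariationOn.sub {f g : α → E} {s : Set α}
    (hf : LocallyBoundedVariationOn f s) (hg : LocallyBoundedVariationOn g s) :
    LocallyBoundedVariationOn (f - g) s := fun a b ha hb ↦
  ne_top_of_le_ne_top (add_ne_top.2 ⟨hf a b ha hb, hg a b ha hb⟩) (eVariationOn_sub_le f g _)

end Variation

lemma Monotone.convexOn_intervalIntegral {p : ℝ → ℝ} (hp : Monotone p) (a : ℝ) :
    ConvexOn ℝ univ fun x ↦ ∫ t in a..x, p t := by
  have hint : ∀ u v : ℝ, IntervalIntegrable p volume u v := fun _ _ ↦ hp.intervalIntegrable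
  refine convexOn_of_slope_mono_adjacent convex_univ fun {x y z} _ _ hxy hyz ↦ ?_
  simp only [intervalIntegral.integral_interval_sub_left (hint a _) (hint a _)]
  have hleft : ∫ t in x..y, p t ≤ (y - x) * p y := by
    simpa using intervalIntegral.integral_mono_on hxy.le (hint x y) intervalIntegrable_const
      fun t ht ↦ hp ht.2
  have hright : (z - y) * p y ≤ ∫ t in y..z, p t := by
    simpa using intervalIntegral.integral_mono_on hyz.le intervalIntegrable_const (hint y z)
      fun t ht ↦ hp ht.1
  calc (∫ t in x..y, p t) / (y - x) ≤ p y := by rwa [div_le_iff₀ (sub_pos.2 hxy), mul_comm]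
    _ ≤ (∫ t in y..z, p t) / (z - y) := by rwa [le_div_iff₀ (sub_pos.2 hyz), mul_comm]

namespace ConvexOn

variable {f : ℝ → ℝ}

lemma continuous_of_univ (hf : ConvexOn ℝ univ f) : Continuous f :=
  continuousOn_univ.1 (hf.continuousOn isOpen_univ)

lemma hasDerivWithinAt_rightDeriv (hf : ConvexOn ℝ univ f) (x : ℝ) :
    HasDerivWithinAt f (derivWithin f (Ioi x) x) (Ioi x) x :=
  hf.hasDerivWithinAt_rightDeriv_of_mem_interior (by simp)

lemma monotone_rightDeriv (hf : ConvexOn ℝ univ f) : Monotone fun x ↦ derivWithin f (Ioi x) x :=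
  monotoneOn_univ.1 (by simpa using hf.monotoneOn_rightDeriv)

lemma continuousWithinAt_Ici_rightDeriv (hf : ConvexOn ℝ univ f) (x : ℝ) :
    ContinuousWithinAt (fun y ↦ derivWithin f (Ioi y) y) (Ici x) x := by
  set φ := fun y ↦ derivWithin f (Ioi y) y
  have hlim := hf.monotone_rightDeriv.tendsto_nhdsGT x
  set L := sInf (φ '' Ioi x)
  have hL_le_slope : ∀ z ∈ Ioi x, L ≤ slope f x z := by
    intro z hz
    have hslope : Tendsto (fun y ↦ slope f y z) (𝓝[>] x) (𝓝 (slope f x z)) := by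
      simp only [slope_def_field]
      exact ((continuousAt_const.sub hf.continuous_of_univ.continuousAt).div
        (continuousAt_const.sub continuousAt_id) (sub_ne_zero.2 (ne_of_gt hz))).tendsto.mono_left
          nhdsWithin_le_nhds
    refine le_of_tendsto_of_tendsto hlim hslope ?_
    filter_upwards [Ioo_mem_nhdsGT hz] with y hy
    exact hf.rightDeriv_le_slope_of_mem_interior (by simp) (mem_univ z) hy.2
  have hL_le : L ≤ φ x := by
    have hderiv : Tendsto (slope f x) (𝓝[>] x) (𝓝 (φ x)) := by
      simpa using hasDerivWithinAt_iff_tendsto_slope.1 (hf.hasDerivWithinAt_rightDeriv x)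
    exact ge_of_tendsto hderiv (eventually_nhdsWithin_of_forall hL_le_slope)
  have hle_L : φ x ≤ L := le_csInf (nonempty_Ioi.image _) fun _ ⟨y, hy, hφy⟩ ↦
    hφy ▸ hf.monotone_rightDeriv (le_of_lt hy)
  rw [← continuousWithinAt_Ioi_iff_Ici, ContinuousWithinAt, le_antisymm hle_L hL_le]
  exact hlim

lemma integral_rightDeriv (hf : ConvexOn ℝ univ f) (a b : ℝ) :
    ∫ t in a..b, derivWithin f (Ioi t) t = f b - f a :=
  intervalIntegral.integral_eq_sub_of_hasDeriv_right
    hf.continuous_of_univ.continuousOn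
    (fun t _ ↦ hf.hasDerivWithinAt_rightDeriv t) hf.monotone_rightDeriv.intervalIntegrable

end ConvexOn

lemma exists_convexOn_sub_convexOn_of_eq_add_integral {f f' : ℝ → ℝ} {a : ℝ}
    (hf' : LocallyBoundedVariationOn f' univ) (hf : ∀ x, f x = f a + ∫ y in a..x, f' y) :
    ∃ g h : ℝ → ℝ, ConvexOn ℝ univ g ∧ ConvexOn ℝ univ h ∧ f = g - h := by
  obtain ⟨p, q, hp, hq, rfl⟩ := hf'.exists_monotoneOn_sub_monotoneOn
  rw [monotoneOn_univ] at hp hq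
  refine ⟨fun x ↦ f a + ∫ t in a..x, p t, fun x ↦ ∫ t in a..x, q t,
    (convexOn_const _ convex_univ).add (hp.convexOn_intervalIntegral a),
    hq.convexOn_intervalIntegral a, funext fun x ↦ ?_⟩
  rw [hf x, Pi.sub_apply, add_sub_assoc, ← intervalIntegral.integral_sub hp.intervalIntegrable
    hq.intervalIntegrable]
  rfl

/-- `f : ℝ → ℝ` is (locally) absolutely continuous with a right-continuous Radon–Nikodym
derivative `f'` of locally bounded variation if and only if `f` is the difference of
two convex functions. -/
theorem absolutelyContinuous_rightCont_bv_iff_diff_convex (f : ℝ → ℝ) :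
    (∃ f' : ℝ → ℝ,
        LocallyIntegrable f' ∧
        (∀ x : ℝ, ContinuousWithinAt f' (Set.Ici x) x) ∧
        (∀ a b : ℝ, a < b → pVarOn 1 f' a b < ⊤) ∧
        (∀ x : ℝ, f x = f 0 + ∫ y in (0 : ℝ)..x, f' y)) ↔
    (∃ g h : ℝ → ℝ, ConvexOn ℝ Set.univ g ∧ ConvexOn ℝ Set.univ h ∧ f = g - h) := by
  constructor
  · rintro ⟨f', -, -, hbv, hftc⟩
    exact exists_convexOn_sub_convexOn_of_eq_add_integral
      ((locallyBoundedVariationOn_univ_iff_pVarOn_one_lt_top f').2 hbv) hftc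
  · rintro ⟨g, h, hg, hh, rfl⟩
    have hg' := hg.monotone_rightDeriv
    have hh' := hh.monotone_rightDeriv
    refine ⟨fun x ↦ derivWithin g (Ioi x) x - derivWithin h (Ioi x) x,
      hg'.locallyIntegrable.sub hh'.locallyIntegrable,
      fun x ↦
        (hg.continuousWithinAt_Ici_rightDeriv x).sub (hh.continuousWithinAt_Ici_rightDeriv x),
      (locallyBoundedVariationOn_univ_iff_pVarOn_one_lt_top _).1
        ((hg'.monotoneOn univ).locallyBoundedVariationOn.sub
          (hh'.monotoneOn univ).locallyBoundedVariationOn),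
      fun x ↦ ?_⟩
    rw [intervalIntegral.integral_sub hg'.intervalIntegrable hh'.intervalIntegrable,
      hg.integral_rightDeriv, hh.integral_rightDeriv, Pi.sub_apply, Pi.sub_apply]
    ring
end

section
/- Let λ > 0, K > 0, and consider the repeated buy-low/sell-high strategy on an interval [u, u+δ] ⊂ (−K, K): starting with capital 1, each time the path S hits u buy (current wealth)/(2K) shares and sell when S hits u+δ (stopping if S hits −K). If the continuous path ω satisfies sup_{t∈[0,T]}|ω(t)| < K and completes at least m upcrossings of [u, u+δ] by time T without hitting −K, then the resulting wealth after the m-th upcrossing is at least (1 + δ/(2K))^m, and the wealth process never goes below 0 (the strategy is 1-admissible). -/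
/-!
Writing `r = 1 + δ/(2K)`, each completed upcrossing multiplies the wealth by `r`, so by
induction the wealth is `r^i` at the `i`-th buy time and `r^(i+1)` at the `i`-th sale time.
Between a sale and the next purchase the wealth is constant; while holding `W/(2K)` shares
bought at level `u < K`, the path stays above `-K`, so the price drops by less than `2K` and
the wealth stays nonnegative.
-/

open Set

section Interleaved

variable {m : ℕ}

theorem exists_mem_Icc_of_mem_Icc_interleaved {a b : ℕ → ℝ} (hm : 0 < m) {t : ℝ}
    (ht : t ∈ Icc (a 0) (b (m - 1))) :
    (∃ i < m, t ∈ Icc (a i) (b i)) ∨ ∃ i, i + 1 < m ∧ t ∈ Icc (b i) (a (i + 1)) := by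
  set i := Nat.findGreatest (fun j => a j ≤ t) (m - 1)
  have hi : i ≤ m - 1 := Nat.findGreatest_le _
  have hait : a i ≤ t := Nat.findGreatest_spec (P := fun j => a j ≤ t) (Nat.zero_le _) ht.1
  rcases le_or_gt t (b i) with htb | hbt
  · exact .inl ⟨i, by omega, hait, htb⟩
  · have hsucc : i + 1 < m := by
      by_contra h
      have : i = m - 1 := by omega
      exact (this ▸ hbt).not_ge ht.2
    have hta : t < a (i + 1) :=
      not_le.mp (Nat.findGreatest_is_greatest (Nat.lt_succ_self i) (by omega))
    exact .inr ⟨i, hsucc, hbt.le, hta.le⟩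

theorem interleaved_eq_pow {x y : ℕ → ℝ} {r : ℝ} (hx0 : x 0 = 1)
    (hy : ∀ i < m, y i = x i * r) (hx : ∀ i, i + 1 < m → x (i + 1) = y i) :
    ∀ i < m, x i = r ^ i ∧ y i = r ^ (i + 1) := by
  intro i
  induction i with
  | zero => intro h; simp [hy 0 h, hx0]
  | succ n ih =>
    intro h
    have hxn : x (n + 1) = r ^ (n + 1) := by rw [hx n h, (ih (by omega)).2]
    exact ⟨hxn, by rw [hy (n + 1) h, hxn, ← pow_succ]⟩

end Interleaved

theorem one_add_sub_div_nonneg {x u c : ℝ} (hc : 0 < c) (h : u - x ≤ c) :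
    0 ≤ 1 + (x - u) / c := by
  have : (u - x) / c ≤ 1 := (div_le_one hc).2 h
  rw [← neg_sub, neg_div]
  linarith

theorem buy_low_sell_high_wealth_general
    (ω : ℝ → ℝ)
    (T K δ u : ℝ) (hK : 0 < K) (hδ : 0 < δ)
    (huδ : u + δ < K)
    (m : ℕ) (hm : 1 ≤ m)
    (a b : ℕ → ℝ) (W : ℝ → ℝ)
    (ha0 : 0 ≤ a 0)
    (hab : ∀ i < m, a i < b i)
    (hba : ∀ i, i + 1 < m → b i < a (i + 1))
    (hhit : ∀ i < m, ω (a i) = u ∧ ω (b i) = u + δ)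
    (hbT : b (m - 1) ≤ T)
    (hbound : ∀ t ∈ Set.Icc (0 : ℝ) T, |ω t| < K)
    -- the wealth process of the strategy:
    (hW0 : ∀ t ∈ Set.Icc 0 (a 0), W t = 1)
    (hWin : ∀ i < m, ∀ t ∈ Set.Icc (a i) (b i),
      W t = W (a i) * (1 + (ω t - u) / (2 * K)))
    (hWout : ∀ i, i + 1 < m → ∀ t ∈ Set.Icc (b i) (a (i + 1)), W t = W (b i)) :
    W (b (m - 1)) ≥ (1 + δ / (2 * K)) ^ m ∧
    ∀ t ∈ Set.Icc 0 (b (m - 1)), 0 ≤ W t := by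
  have hgain : 1 + (u + δ - u) / (2 * K) = 1 + δ / (2 * K) := by ring
  have hpow := interleaved_eq_pow (x := fun i => W (a i)) (y := fun i => W (b i))
    (hW0 (a 0) ⟨ha0, le_rfl⟩)
    (fun i hi => by rw [hWin i hi (b i) ⟨(hab i hi).le, le_rfl⟩, (hhit i hi).2, hgain])
    (fun i hi => hWout i hi (a (i + 1)) ⟨(hba i hi).le, le_rfl⟩)
  have hr : 0 ≤ 1 + δ / (2 * K) := by positivity
  refine ⟨?_, fun t ⟨ht0, htb⟩ => ?_⟩
  · have hlast := (hpow (m - 1) (by omega)).2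
    rw [Nat.sub_add_cancel hm] at hlast
    exact hlast.ge
  rcases le_or_gt t (a 0) with h0 | h0
  · rw [hW0 t ⟨ht0, h0⟩]
    exact zero_le_one
  rcases exists_mem_Icc_of_mem_Icc_interleaved (by omega) ⟨h0.le, htb⟩ with
    ⟨i, hi, hti⟩ | ⟨i, hi, hti⟩
  · have hωt : -K < ω t := (abs_lt.mp (hbound t ⟨ht0, htb.trans hbT⟩)).1
    rw [hWin i hi t hti, (hpow i hi).1]
    exact mul_nonneg (pow_nonneg hr i) (one_add_sub_div_nonneg (by linarith) (by linarith))
  · rw [hWout i hi t hti, (hpow i (by omega)).2]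
    exact pow_nonneg hr _

/-- The repeated buy-low/sell-high strategy on `[u, u+δ] ⊂ (-K, K)`: starting with
capital `1`, each time the path `ω` hits `u` we buy `wealth/(2K)` shares and sell when
`ω` hits `u + δ`.  If `sup_{[0,T]} |ω| < K` and `ω` completes `m` upcrossings of
`[u, u+δ]` by time `T` (with upcrossing times `a_0 < b_0 < a_1 < b_1 < …`), then the
wealth process `W` satisfies `W ≥ (1 + δ/(2K))^m` after the `m`-th upcrossing and
stays nonnegative throughout (the strategy is 1-admissible). -/
theorem buy_low_sell_high_wealth
    (ω : ℝ → ℝ) (hω : Continuous ω)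
    (T K δ u : ℝ) (hT : 0 < T) (hK : 0 < K) (hδ : 0 < δ)
    (hu : -K < u) (huδ : u + δ < K)
    (m : ℕ) (hm : 1 ≤ m)
    (a b : ℕ → ℝ) (W : ℝ → ℝ)
    (ha0 : 0 ≤ a 0)
    (hab : ∀ i < m, a i < b i)
    (hba : ∀ i, i + 1 < m → b i < a (i + 1))
    (hhit : ∀ i < m, ω (a i) = u ∧ ω (b i) = u + δ)
    (hbT : b (m - 1) ≤ T)
    (hbound : ∀ t ∈ Set.Icc (0 : ℝ) T, |ω t| < K)
    -- the wealth process of the strategy: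
    (hW0 : ∀ t ∈ Set.Icc 0 (a 0), W t = 1)
    (hWin : ∀ i < m, ∀ t ∈ Set.Icc (a i) (b i),
      W t = W (a i) * (1 + (ω t - u) / (2 * K)))
    (hWout : ∀ i, i + 1 < m → ∀ t ∈ Set.Icc (b i) (a (i + 1)), W t = W (b i)) :
    W (b (m - 1)) ≥ (1 + δ / (2 * K)) ^ m ∧
    ∀ t ∈ Set.Icc 0 (b (m - 1)), 0 ≤ W t :=
  buy_low_sell_high_wealth_general ω T K δ u hK hδ huδ m hm a b W ha0 hab hba hhit hbT hbound hW0
    hWin hWout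
end
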